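/- arXiv:1701.05527 — 7 statements merged into one kernel-verified Lean document; each statement's English description precedes it below -/
import Mathlib

section
/- Let V be a finite dimensional vector space over a field F, T an endomorphism of V, and T* its adjoint acting on the dual space V*. Then the bilinear map sending (Tv, T*λ) to λ(Tv) = (T*λ)(v) is a well-defined perfect (nondegenerate) pairing between the image of T and the image of T*. -/
theorem stmt0_general (F V : Type*) [Field F] [AddCommGroup V] [Module F V]
    (T : V →ₗ[F] V) :
    -- well-definedness
    (∀ (v v' : V) (l l' : Module.Dual F V), T v = T v' → T.dualMap l = T.dualMap l' →
        l (T v) = l' (T v')) ∧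
    -- perfectness: nondegeneracy in the first variable
    (∀ v : V, (∀ l : Module.Dual F V, l (T v) = 0) → T v = 0) ∧
    -- perfectness: nondegeneracy in the second variable
    (∀ l : Module.Dual F V, (∀ v : V, l (T v) = 0) → T.dualMap l = 0) := by
  refine ⟨fun v v' l l' hv hl => ?_, fun v h => (Module.forall_dual_apply_eq_zero_iff F (T v)).mp h,
    fun l h => LinearMap.ext h⟩
  calc l (T v) = T.dualMap l v := rfl
    _ = T.dualMap l' v := by rw [hl]
    _ = l' (T v') := by rw [T.dualMap_apply, hv]

/-- For a finite dimensional vector space `V` over a field `F`, an endomorphism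
`T` and its adjoint (dual map) `T*` on `V* = Module.Dual F V`, the bilinear map sending
`(T v, T* λ)` to `λ (T v) = (T* λ) v` is a well-defined perfect pairing between the image
of `T` and the image of `T*`. -/
theorem stmt0 (F V : Type*) [Field F] [AddCommGroup V] [Module F V] [FiniteDimensional F V]
    (T : V →ₗ[F] V) :
    -- well-definedness
    (∀ (v v' : V) (l l' : Module.Dual F V), T v = T v' → T.dualMap l = T.dualMap l' →
        l (T v) = l' (T v')) ∧
    -- perfectness: nondegeneracy in the first variable
    (∀ v : V, (∀ l : Module.Dual F V, l (T v) = 0) → T v = 0) ∧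
    -- perfectness: nondegeneracy in the second variable
    (∀ l : Module.Dual F V, (∀ v : V, l (T v) = 0) → T.dualMap l = 0) :=
  stmt0_general F V T
end

section
/- Let W be an increasing filtration of a finite dimensional vector space V over a field K of characteristic zero, and let 𝒴(W) be the set of gradings of W, i.e. semisimple endomorphisms Y with integer eigenvalues such that W_k = E_k(Y) ⊕ W_{k-1} for all k. Then the group exp(W_{-1}gl(V)) acts simply transitively on 𝒴(W) by conjugation, where W_{-1}gl(V) is the set of endomorphisms α with α(W_k) ⊆ W_{k-1} for all k. -/
/-- Exponential of a (nilpotent) endomorphism, as a finite sum `∑_{i < n} αⁱ/i!`.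
For `α` nilpotent on a finite dimensional space and `n = finrank + 1` this is the
usual exponential `e^α`. -/
noncomputable def expNil {K V : Type*} [Field K] [AddCommGroup V] [Module K V]
    (n : ℕ) (α : Module.End K V) : Module.End K V :=
  ∑ i ∈ Finset.range n, ((i.factorial : K)⁻¹) • α ^ i

/-!
Write `L m` for the maps lowering the filtration by `m` steps; `L m = 0` for `m` large.
Since `W k = E_k(Y) + W (k - 1)`, every `δ ∈ L m` satisfies `δ Y - Y δ ≡ m δ` modulo
`L (m + 1)`, and `m` is invertible in characteristic zero. Hence a defect in `L m` can always
be pushed into `L (m + 1)`: successive approximation produces `ν ∈ L 1` with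
`(1 + ν) Y = Y' (1 + ν)`, and, using `e^α - e^β ≡ α - β` modulo `L (m + 1)` whenever
`α - β ∈ L m`, an `α ∈ L 1` with `e^α = 1 + ν`. The same two congruences give uniqueness:
`e^β - e^α ∈ L 1` intertwines `Y` and `Y'`, so it vanishes, and `exp` is injective on `L 1`.
-/

open Module Module.End

section

variable {K V : Type*} [Field K] [AddCommGroup V] [Module K V]

/-- The space `W₋ₘ gl(V)` of the paper. -/
def lowering (W : ℤ → Submodule K V) (m : ℤ) : Submodule K (Module.End K V) :=
  ⨅ k, (W k).compatibleMaps (W (k - m))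

section Lowering

variable {W : ℤ → Submodule K V} {m m' : ℤ} {φ ψ : Module.End K V}

theorem mem_lowering_iff_map_le : φ ∈ lowering W m ↔ ∀ k, (W k).map φ ≤ W (k - m) := by
  simp only [lowering, Submodule.mem_iInf, Submodule.map_le_iff_le_comap]
  rfl

theorem mem_lowering : φ ∈ lowering W m ↔ ∀ k, ∀ v ∈ W k, φ v ∈ W (k - m) := by
  simp only [lowering, Submodule.mem_iInf]
  rfl

theorem lowering_anti (hW : Monotone W) (h : m ≤ m') : lowering W m' ≤ lowering W m :=
  fun _ hφ => mem_lowering.2 fun _ _ hv => hW (by omega) (mem_lowering.1 hφ _ _ hv)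

theorem mul_mem_lowering (hφ : φ ∈ lowering W m) (hψ : ψ ∈ lowering W m') :
    φ * ψ ∈ lowering W (m + m') :=
  mem_lowering.2 fun k v hv => by
    simpa [sub_sub, add_comm m'] using mem_lowering.1 hφ _ _ (mem_lowering.1 hψ k v hv)

theorem pow_mem_lowering (hφ : φ ∈ lowering W 1) (i : ℕ) : φ ^ i ∈ lowering W i := by
  induction i with
  | zero => exact mem_lowering.2 fun k v hv => by simpa using hv
  | succ i ih => simpa [pow_succ] using mul_mem_lowering ih hφ

theorem exists_lowering_eq_bot (hbot : ∃ a, ∀ k ≤ a, W k = ⊥)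
    (htop : ∃ b, ∀ k, b ≤ k → W k = ⊤) : ∃ M, lowering W M = ⊥ := by
  obtain ⟨a, ha⟩ := hbot
  obtain ⟨b, hb⟩ := htop
  refine ⟨b - a, (Submodule.eq_bot_iff _).2 fun φ hφ => LinearMap.ext fun v => ?_⟩
  have hv : v ∈ W b := by simp [hb b le_rfl]
  simpa [ha a le_rfl] using mem_lowering.1 hφ b v hv

theorem eq_zero_of_forall_mem_lowering (hW : Monotone W) (hbot : ∃ a, ∀ k ≤ a, W k = ⊥)
    (htop : ∃ b, ∀ k, b ≤ k → W k = ⊤) (h : ∀ m, 1 ≤ m → φ ∈ lowering W m) : φ = 0 := by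
  obtain ⟨M, hM⟩ := exists_lowering_eq_bot hbot htop
  simpa [hM] using lowering_anti hW (le_max_left M 1) (h _ (le_max_right M 1))

theorem exists_mem_lowering_eq_zero (hW : Monotone W) (hbot : ∃ a, ∀ k ≤ a, W k = ⊥)
    (htop : ∃ b, ∀ k, b ≤ k → W k = ⊤) (F : Module.End K V → Module.End K V)
    (hstart : ∃ x ∈ lowering W 1, F x ∈ lowering W 1)
    (hstep : ∀ m, 1 ≤ m → ∀ x ∈ lowering W 1, F x ∈ lowering W m →
      ∃ x' ∈ lowering W 1, F x' ∈ lowering W (m + 1)) :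
    ∃ x ∈ lowering W 1, F x = 0 := by
  have happrox : ∀ m, 1 ≤ m → ∃ x ∈ lowering W 1, F x ∈ lowering W m := fun m hm =>
    Int.leInduction hstart (fun m hm ⟨x, hx, hFx⟩ => hstep m hm x hx hFx) m hm
  obtain ⟨M, hM⟩ := exists_lowering_eq_bot hbot htop
  obtain ⟨x, hx, hFx⟩ := happrox (max M 1) (le_max_right M 1)
  exact ⟨x, hx, by simpa [hM] using lowering_anti hW (le_max_left M 1) hFx⟩

theorem pow_finrank_eq_zero_of_mem_lowering [FiniteDimensional K V] (hW : Monotone W)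
    (hbot : ∃ a, ∀ k ≤ a, W k = ⊥) (htop : ∃ b, ∀ k, b ≤ k → W k = ⊤)
    (hφ : φ ∈ lowering W 1) : φ ^ finrank K V = 0 := by
  obtain ⟨M, hM⟩ := exists_lowering_eq_bot hbot htop
  have hnil : IsNilpotent φ :=
    ⟨M.toNat, by simpa [hM] using lowering_anti hW (Int.self_le_toNat M) (pow_mem_lowering hφ _)⟩
  simpa [hnil.charpoly_eq_X_pow_finrank] using φ.aeval_self_charpoly

end Lowering

def SplitsFiltration (W : ℤ → Submodule K V) (Y : Module.End K V) : Prop :=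
  ∀ k : ℤ, eigenspace Y (k : K) ⊔ W (k - 1) = W k

theorem le_of_sup_pred_eq {W E C : ℤ → Submodule K V} (hbot : ∃ a, ∀ k ≤ a, W k = ⊥)
    (hW : ∀ k, E k ⊔ W (k - 1) = W k) (hC : Monotone C) (hE : E ≤ C) : W ≤ C := by
  obtain ⟨a, ha⟩ := hbot
  intro k
  rcases le_total k a with hk | hk
  · simp [ha k hk]
  induction k, hk using Int.leInduction with
  | base => simp [ha a le_rfl]
  | succ k _ ih =>
    rw [← hW]
    exact sup_le (hE _) (by simpa using ih.trans (hC (by omega)))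

namespace SplitsFiltration

variable {W : ℤ → Submodule K V} {m : ℤ} {Y Y' δ : Module.End K V}

theorem eigenspace_le (hY : SplitsFiltration W Y) (k : ℤ) : eigenspace Y (k : K) ≤ W k :=
  hY k ▸ le_sup_left

theorem mem_lowering_of_eigenspace (hW : Monotone W) (hbot : ∃ a, ∀ k ≤ a, W k = ⊥)
    (hY : SplitsFiltration W Y) {φ : Module.End K V}
    (h : ∀ k : ℤ, ∀ e ∈ eigenspace Y (k : K), φ e ∈ W (k - m)) : φ ∈ lowering W m :=
  mem_lowering.2 fun k _ hv =>
    le_of_sup_pred_eq (C := fun k => (W (k - m)).comap φ) hbot hY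
      (fun _ _ hij => Submodule.comap_mono (hW (by omega))) h k hv

theorem mem_lowering_zero (hW : Monotone W) (hbot : ∃ a, ∀ k ≤ a, W k = ⊥)
    (hY : SplitsFiltration W Y) : Y ∈ lowering W 0 :=
  hY.mem_lowering_of_eigenspace hW hbot fun k e he => by
    simpa [mem_eigenspace_iff.1 he] using Submodule.smul_mem _ _ (hY.eigenspace_le k he)

theorem sub_mem_lowering_one (hW : Monotone W) (hbot : ∃ a, ∀ k ≤ a, W k = ⊥)
    (hY : SplitsFiltration W Y) (hY' : SplitsFiltration W Y') : Y - Y' ∈ lowering W 1 :=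
  hY.mem_lowering_of_eigenspace hW hbot fun k e he => by
    obtain ⟨e', he', w, hw, hew⟩ := Submodule.mem_sup.1 (hY' k ▸ hY.eigenspace_le k he)
    have hYw : Y' w ∈ W (k - 1) := by
      simpa using mem_lowering.1 (hY'.mem_lowering_zero hW hbot) _ w hw
    have h : (Y - Y') e = (k : K) • w - Y' w := by
      rw [LinearMap.sub_apply, mem_eigenspace_iff.1 he, ← hew, map_add,
        mem_eigenspace_iff.1 he', smul_add]
      abel
    rw [h]
    exact sub_mem (Submodule.smul_mem _ _ hw) hYw

theorem commutator_sub_smul_mem_lowering (hW : Monotone W) (hbot : ∃ a, ∀ k ≤ a, W k = ⊥)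
    (hY : SplitsFiltration W Y) (hδ : δ ∈ lowering W m) :
    δ * Y - Y * δ - (m : K) • δ ∈ lowering W (m + 1) :=
  hY.mem_lowering_of_eigenspace hW hbot fun k e he => by
    obtain ⟨f, hf, w, hw, hfw⟩ :=
      Submodule.mem_sup.1 (hY (k - m) ▸ mem_lowering.1 hδ k e (hY.eigenspace_le k he))
    have hYw : Y w ∈ W (k - m - 1) := by
      simpa using mem_lowering.1 (hY.mem_lowering_zero hW hbot) _ w hw
    have h : (δ * Y - Y * δ - (m : K) • δ) e = ((k : K) - m) • w - Y w := by
      simp only [LinearMap.sub_apply, LinearMap.smul_apply, Module.End.mul_apply,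
        mem_eigenspace_iff.1 he, map_smul, ← hfw, map_add, mem_eigenspace_iff.1 hf]
      push_cast
      module
    rw [h, sub_add_eq_sub_sub]
    exact sub_mem (Submodule.smul_mem _ _ hw) hYw

variable [CharZero K]

theorem mem_lowering_succ_of_mul_eq_mul (hW : Monotone W) (hbot : ∃ a, ∀ k ≤ a, W k = ⊥)
    (hY : SplitsFiltration W Y) (hY' : SplitsFiltration W Y') (hm : m ≠ 0)
    (hδ : δ ∈ lowering W m) (hδY : δ * Y = Y' * δ) : δ ∈ lowering W (m + 1) := by
  have hmδ : (m : K) • δ = (Y' - Y) * δ - (δ * Y - Y * δ - (m : K) • δ) := by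
    rw [hδY, sub_mul]
    abel
  have hmem : (m : K) • δ ∈ lowering W (m + 1) := by
    rw [hmδ]
    refine sub_mem ?_ (hY.commutator_sub_smul_mem_lowering hW hbot hδ)
    rw [add_comm]
    exact mul_mem_lowering (hY'.sub_mem_lowering_one hW hbot hY) hδ
  simpa [smul_smul, hm] using Submodule.smul_mem _ (m : K)⁻¹ hmem

theorem eq_zero_of_mul_eq_mul (hW : Monotone W) (hbot : ∃ a, ∀ k ≤ a, W k = ⊥)
    (htop : ∃ b, ∀ k, b ≤ k → W k = ⊤) (hY : SplitsFiltration W Y) (hY' : SplitsFiltration W Y')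
    (hδ : δ ∈ lowering W 1) (hδY : δ * Y = Y' * δ) : δ = 0 :=
  eq_zero_of_forall_mem_lowering hW hbot htop fun m hm =>
    Int.leInduction hδ
      (fun m hm ih => hY.mem_lowering_succ_of_mul_eq_mul hW hbot hY' (by omega) ih hδY) m hm

theorem exists_mul_eq_mul (hW : Monotone W) (hbot : ∃ a, ∀ k ≤ a, W k = ⊥)
    (htop : ∃ b, ∀ k, b ≤ k → W k = ⊤) (hY : SplitsFiltration W Y) (hY' : SplitsFiltration W Y') :
    ∃ ν ∈ lowering W 1, (1 + ν) * Y = Y' * (1 + ν) := by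
  have hstart : (1 + 0) * Y - Y' * (1 + 0) ∈ lowering W 1 := by
    simpa using hY.sub_mem_lowering_one hW hbot hY'
  obtain ⟨ν, hν, h⟩ := exists_mem_lowering_eq_zero hW hbot htop
    (fun ν => (1 + ν) * Y - Y' * (1 + ν)) ⟨0, zero_mem _, hstart⟩ fun m hm ν hν hδ => by
      set δ := (1 + ν) * Y - Y' * (1 + ν) with hδdef
      set τ := -(m : K)⁻¹ • δ with hτ
      have hmτ : (m : K) • τ = -δ := by
        rw [hτ, smul_smul, mul_neg, mul_inv_cancel₀ (by exact_mod_cast (by omega : m ≠ 0)),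
          neg_one_smul]
      have hτm : τ ∈ lowering W m := Submodule.smul_mem _ _ hδ
      refine ⟨ν + τ, add_mem hν (lowering_anti hW hm hτm), ?_⟩
      have h : (1 + (ν + τ)) * Y - Y' * (1 + (ν + τ)) =
          (τ * Y - Y * τ - (m : K) • τ) + (Y - Y') * τ := by
        rw [hmτ, hδdef]
        noncomm_ring
      rw [h]
      exact add_mem (hY.commutator_sub_smul_mem_lowering hW hbot hτm)
        (lowering_anti hW (by omega) (mul_mem_lowering (hY.sub_mem_lowering_one hW hbot hY') hτm))
  exact ⟨ν, hν, sub_eq_zero.1 h⟩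

end SplitsFiltration

section Exp

variable {W : ℤ → Submodule K V} {n : ℕ} {m : ℤ} {α β ν : Module.End K V}

theorem expNil_zero (hn : n ≠ 0) : expNil n (0 : Module.End K V) = 1 := by
  obtain ⟨n, rfl⟩ := Nat.exists_eq_succ_of_ne_zero hn
  simp [expNil, Finset.sum_range_succ']

theorem expNil_mul_expNil_neg [CharZero K] (hα : α ^ n = 0) :
    expNil n α * expNil n (-α) = 1 := by
  let _ : Module ℚ (Module.End K V) := Module.compHom _ (algebraMap ℚ K)
  have hexp : ∀ β : Module.End K V, β ^ n = 0 → expNil n β = IsNilpotent.exp β := fun β hβ => by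
    rw [IsNilpotent.exp_eq_sum hβ]
    refine Finset.sum_congr rfl fun i _ => ?_
    change ((i.factorial : K)⁻¹) • β ^ i = algebraMap ℚ K (i.factorial : ℚ)⁻¹ • β ^ i
    simp
  rw [hexp α hα, hexp (-α) (by rw [neg_pow, hα, mul_zero]),
    IsNilpotent.exp_mul_exp_neg_self ⟨n, hα⟩]

theorem expNil_conj_eq_iff [CharZero K] (hα : α ^ n = 0) {Y Y' : Module.End K V} :
    expNil n α * Y * expNil n (-α) = Y' ↔ expNil n α * Y = Y' * expNil n α :=
  let u : (Module.End K V)ˣ :=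
    ⟨expNil n α, expNil n (-α), expNil_mul_expNil_neg hα,
      by simpa using expNil_mul_expNil_neg (α := -α) (by rw [neg_pow, hα, mul_zero])⟩
  Units.mul_inv_eq_iff_eq_mul (b := u)

theorem pow_succ_sub_pow_succ_mem_lowering (hW : Monotone W) (hα : α ∈ lowering W 1)
    (hβ : β ∈ lowering W 1) (h : α - β ∈ lowering W m) (i : ℕ) :
    α ^ (i + 1) - β ^ (i + 1) ∈ lowering W (m + i) := by
  induction i with
  | zero => simpa using h
  | succ i ih =>
    have hsplit : α ^ (i + 2) - β ^ (i + 2) =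
        α ^ (i + 1) * (α - β) + (α ^ (i + 1) - β ^ (i + 1)) * β := by
      noncomm_ring
    rw [hsplit]
    refine add_mem (lowering_anti hW ?_ (mul_mem_lowering (pow_mem_lowering hα _) h))
      (lowering_anti hW ?_ (mul_mem_lowering ih hβ)) <;> push_cast <;> omega

theorem expNil_sub_expNil_sub_mem_lowering (hW : Monotone W) (hn : 2 ≤ n)
    (hα : α ∈ lowering W 1) (hβ : β ∈ lowering W 1) (h : α - β ∈ lowering W m) :
    expNil n α - expNil n β - (α - β) ∈ lowering W (m + 1) := by
  have hsum : expNil n α - expNil n β - (α - β) =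
      ∑ i ∈ Finset.Ico 2 n, ((i.factorial : K)⁻¹) • (α ^ i - β ^ i) := by
    rw [expNil, expNil, ← Finset.sum_sub_distrib, Finset.range_eq_Ico,
      ← Finset.sum_Ico_consecutive _ (Nat.zero_le 2) hn]
    simp [Finset.sum_range_succ, ← smul_sub]
  rw [hsum]
  refine Submodule.sum_mem _ fun i hi => Submodule.smul_mem _ _ ?_
  obtain ⟨j, rfl⟩ := Nat.exists_eq_add_of_le' (Finset.mem_Ico.1 hi).1
  refine lowering_anti hW ?_ (pow_succ_sub_pow_succ_mem_lowering hW hα hβ h (j + 1))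
  omega


theorem eq_of_expNil_eq_expNil (hW : Monotone W) (hbot : ∃ a, ∀ k ≤ a, W k = ⊥)
    (htop : ∃ b, ∀ k, b ≤ k → W k = ⊤) (hn : 2 ≤ n) (hα : α ∈ lowering W 1)
    (hβ : β ∈ lowering W 1) (h : expNil n α = expNil n β) : α = β := by
  rw [← sub_eq_zero]
  refine eq_zero_of_forall_mem_lowering hW hbot htop fun m hm =>
    Int.leInduction (sub_mem hα hβ) (fun m _ ih => ?_) m hm
  have h' := expNil_sub_expNil_sub_mem_lowering hW hn hα hβ ih
  rwa [h, sub_self, zero_sub, neg_mem_iff] at h'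

theorem exists_expNil_eq_one_add (hW : Monotone W) (hbot : ∃ a, ∀ k ≤ a, W k = ⊥)
    (htop : ∃ b, ∀ k, b ≤ k → W k = ⊤) (hn : 2 ≤ n) (hν : ν ∈ lowering W 1) :
    ∃ α ∈ lowering W 1, expNil n α = 1 + ν := by
  have hstart : expNil n 0 - (1 + ν) ∈ lowering W 1 := by
    simpa [expNil_zero (by omega : n ≠ 0)] using hν
  obtain ⟨α, hα, h⟩ := exists_mem_lowering_eq_zero hW hbot htop (fun α => expNil n α - (1 + ν))
    ⟨0, zero_mem _, hstart⟩ fun m hm α hα hδ => by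
      have hα' : α - (expNil n α - (1 + ν)) ∈ lowering W 1 :=
        sub_mem hα (lowering_anti hW hm hδ)
      refine ⟨_, hα', ?_⟩
      simpa using expNil_sub_expNil_sub_mem_lowering hW hn hα' hα (by simpa using neg_mem hδ)
  exact ⟨α, hα, sub_eq_zero.1 h⟩

end Exp

theorem existsUnique_expNil_conj [CharZero K] {W : ℤ → Submodule K V} {n : ℕ}
    (hW : Monotone W) (hbot : ∃ a, ∀ k ≤ a, W k = ⊥) (htop : ∃ b, ∀ k, b ≤ k → W k = ⊤)
    (hn : 2 ≤ n) (hnil : ∀ φ ∈ lowering W 1, φ ^ n = 0) {Y Y' : Module.End K V}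
    (hY : SplitsFiltration W Y) (hY' : SplitsFiltration W Y') :
    ∃! α, α ∈ lowering W 1 ∧ expNil n α * Y * expNil n (-α) = Y' := by
  obtain ⟨ν, hν, hνY⟩ := hY.exists_mul_eq_mul hW hbot htop hY'
  obtain ⟨α, hα, hαν⟩ := exists_expNil_eq_one_add hW hbot htop hn hν
  have hαY : expNil n α * Y = Y' * expNil n α := hαν ▸ hνY
  refine ⟨α, ⟨hα, (expNil_conj_eq_iff (hnil α hα)).2 hαY⟩, fun β ⟨hβ, hβY⟩ => ?_⟩
  rw [expNil_conj_eq_iff (hnil β hβ)] at hβY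
  have hdiff : expNil n β - expNil n α ∈ lowering W 1 := by
    simpa using add_mem (lowering_anti hW (by omega : (1 : ℤ) ≤ 1 + 1)
      (expNil_sub_expNil_sub_mem_lowering hW hn hβ hα (sub_mem hβ hα))) (sub_mem hβ hα)
  have hdiffY : (expNil n β - expNil n α) * Y = Y' * (expNil n β - expNil n α) := by
    rw [sub_mul, mul_sub, hβY, hαY]
  exact eq_of_expNil_eq_expNil hW hbot htop hn hβ hα
    (sub_eq_zero.1 (hY.eq_zero_of_mul_eq_mul hW hbot htop hY' hdiff hdiffY))

end

/-- Let `W` be an increasing (finite, exhaustive) filtration of a finite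
dimensional vector space `V` over a field `K` of characteristic zero, and let `𝒴(W)` be the
set of gradings of `W`: semisimple endomorphisms `Y` with integer eigenvalues such that
`W k = E_k(Y) ⊕ W (k-1)` for all `k`.  Then the group `exp(W₋₁ gl(V))` acts simply
transitively on `𝒴(W)` by conjugation: for any two gradings `Y, Y'` there is a unique
`α ∈ W₋₁ gl(V)` with `e^α Y e^{-α} = Y'`. -/
theorem stmt3 (K V : Type*) [Field K] [CharZero K] [AddCommGroup V] [Module K V]
    [FiniteDimensional K V]
    (W : ℤ → Submodule K V) (hmono : Monotone W)
    (hbot : ∃ a, ∀ k ≤ a, W k = ⊥) (htop : ∃ b, ∀ k, b ≤ k → W k = ⊤)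
    (IsGrading : Module.End K V → Prop)
    (hgrad : ∀ Y, IsGrading Y ↔ ∀ k : ℤ,
        Disjoint (Module.End.eigenspace Y ((k : K))) (W (k - 1)) ∧
        Module.End.eigenspace Y ((k : K)) ⊔ W (k - 1) = W k) :
    ∀ Y Y', IsGrading Y → IsGrading Y' →
      ∃! α : Module.End K V,
        (∀ k, (W k).map α ≤ W (k - 1)) ∧
        expNil (Module.finrank K V + 1) α * Y * expNil (Module.finrank K V + 1) (-α) = Y' := by
  intro Y Y' hY hY'
  rcases subsingleton_or_nontrivial V with _ | _
  · exact ⟨0, ⟨by simp, Subsingleton.elim _ _⟩, fun _ _ => Subsingleton.elim _ _⟩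
  have hn : 2 ≤ finrank K V + 1 := Nat.succ_le_succ finrank_pos
  have hnil : ∀ φ ∈ lowering W 1, φ ^ (finrank K V + 1) = 0 := fun φ hφ => by
    rw [pow_succ, pow_finrank_eq_zero_of_mem_lowering hmono hbot htop hφ, zero_mul]
  simpa only [mem_lowering_iff_map_le] using
    existsUnique_expNil_conj hmono hbot htop hn hnil (fun k => ((hgrad Y).1 hY k).2)
      (fun k => ((hgrad Y').1 hY' k).2)
end

section
/- In the Koszul-type setting, define the pairing q_t on the partial Koszul complexes by q_t(N_I h ⊗ e_I, N_J* λ ⊗ e_J) = t_I·λ(N_J h) if I = J (as sets of indices, with t_I = Π_{i∈I} t_i) and 0 otherwise. Then for α in the partial Koszul complex B(H) and β in B(H*): q_t(dα, β) = q_t(α, δ_t β) and q_t(δ_t α, β) = q_t(α, dβ). -/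
/-!
After expanding, both sides of each identity are sums over the pairs `i ∈ J`; writing
`J = insert k I` with `k ∉ I` matches them term by term, because the sign does not see `k`
itself (`ε k (insert k I) = ε k I`), `t_{insert k I} = t_k t_I`, and
`N_{insert k I} = N_k N_I = N_I N_k`.
-/

open Finset

theorem Finset.sum_sum_mem_eq_sum_sum_compl_insert {α M : Type*} [Fintype α] [DecidableEq α]
    [AddCommMonoid M] (f : Finset α → α → M) :
    ∑ J : Finset α, ∑ i ∈ J, f J i = ∑ I : Finset α, ∑ k ∈ Iᶜ, f (insert k I) k := by
  rw [sum_sigma', sum_sigma']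
  refine sum_bij' (fun p _ => ⟨p.1.erase p.2, p.2⟩) (fun p _ => ⟨insert p.2 p.1, p.2⟩)
    ?_ ?_ ?_ ?_ ?_
  all_goals
    rintro ⟨J, i⟩ h
    simp only [mem_sigma, mem_univ, true_and, mem_compl] at h
  iterate 2 simp
  · simp [insert_erase h]
  · simp [erase_insert h]
  · simp [insert_erase h]

theorem Finset.filter_lt_insert_self {α : Type*} [LinearOrder α] (i : α)
    (I : Finset α) : (insert i I).filter (· < i) = I.filter (· < i) := by
  rw [filter_insert, if_neg (lt_irrefl i)]

/-- `a : Finset (Fin r) → H` stands for `∑_I N_I (a I) ⊗ e_I ∈ B(H)` and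
`b : Finset (Fin r) → H*` for `∑_I N_I* (b I) ⊗ e_I ∈ B(H*)`, so that `q` is `q_t` evaluated
through `(N_I* λ)(h) = λ(N_I h)`. -/
theorem stmt7_general (F H : Type*) [Field F] [AddCommGroup H] [Module F H]
    (r : ℕ) (N : Fin r → Module.End F H)
    (hcomm : ∀ i j, Commute (N i) (N j))
    (t : Fin r → F)
    (ε : Fin r → Finset (Fin r) → ℤ)
    (hε : ∀ i J, ε i J = (-1 : ℤ) ^ (J.filter (fun j => j < i)).card)
    (NI : Finset (Fin r) → Module.End F H)
    (hNI : ∀ I : Finset (Fin r), NI I = I.noncommProd N (fun i _ j _ _ => hcomm i j))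
    (q : (Finset (Fin r) → H) → (Finset (Fin r) → Module.Dual F H) → F)
    (hq : ∀ a b, q a b = ∑ I : Finset (Fin r), (∏ i ∈ I, t i) * (b I) ((NI I) (a I)))
    (dH δH : (Finset (Fin r) → H) → (Finset (Fin r) → H))
    (hdH : ∀ a J, dH a J = ∑ i ∈ J, ε i J • a (J.erase i))
    (hδH : ∀ a I, δH a I = ∑ k ∈ Iᶜ, ε k I • t k • (N k) (a (insert k I)))
    (dD δD : (Finset (Fin r) → Module.Dual F H) → (Finset (Fin r) → Module.Dual F H))
    (hdD : ∀ b J, dD b J = ∑ i ∈ J, ε i J • b (J.erase i))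
    (hδD : ∀ b I, δD b I = ∑ k ∈ Iᶜ, ε k I • t k • (N k).dualMap (b (insert k I))) :
    ∀ (a : Finset (Fin r) → H) (b : Finset (Fin r) → Module.Dual F H),
      q (dH a) b = q a (δD b) ∧ q (δH a) b = q a (dD b) := by
  intro a b
  have hε_insert (k : Fin r) (I : Finset (Fin r)) : ε k (insert k I) = ε k I := by
    rw [hε, hε, filter_lt_insert_self]
  have hNI_insert {k : Fin r} {I : Finset (Fin r)} (hk : k ∉ I) :
      NI (insert k I) = N k * NI I ∧ NI (insert k I) = NI I * N k := by
    simp only [hNI]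
    exact ⟨noncommProd_insert_of_notMem _ _ _ _ hk, noncommProd_insert_of_notMem' _ _ _ _ hk⟩
  simp only [hq, hdH, hδH, hdD, hδD, map_sum, map_zsmul, map_smul, LinearMap.sum_apply,
    LinearMap.smul_apply, LinearMap.dualMap_apply, mul_sum, smul_eq_mul]
  constructor
  all_goals
    rw [sum_sum_mem_eq_sum_sum_compl_insert]
    refine sum_congr rfl fun I _ => sum_congr rfl fun k hk => ?_
    rw [mem_compl] at hk
    rw [hε_insert, erase_insert hk, prod_insert hk]
  · rw [(hNI_insert hk).1, Module.End.mul_apply]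
    ring
  · rw [(hNI_insert hk).2, Module.End.mul_apply]
    ring

/-- Adjointness of the Koszul differential `d` and the contraction `δ_t` with
respect to the pairing `q_t` on the partial Koszul complexes `B(H)` and `B(H*)`.

Elements of `B^p(H)` are sums of `N_I h ⊗ e_I`; we represent them by witness coefficient
functions `a : Finset (Fin r) → H`, the function `a` representing `∑_I N_I (a I) ⊗ e_I`,
and similarly elements of `B(H*)` by `b : Finset (Fin r) → H*`, representing
`∑_I N_I* (b I) ⊗ e_I`.  The pairing is
`q_t(∑ N_I (a I) ⊗ e_I, ∑ N_I* (b I) ⊗ e_I) = ∑_I t_I · (N_I* (b I)) (a I)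
  = ∑_I t_I · (b I) (N_I (a I))`.
At witness level the differential is `(d a)(J) = ∑_{i∈J} ε(i,J) • a (J \ i)` (the operator
`N_J` being applied by the representation) and the contraction is
`(δ_t a)(I) = ∑_{k∉I} ε(k,I) • t_k • N_k (a (I ∪ k))` (resp. with `N_k*` on the dual side).
Then `q_t(dα, β) = q_t(α, δ_t β)` and `q_t(δ_t α, β) = q_t(α, dβ)`. -/
theorem stmt7 (F H : Type*) [Field F] [AddCommGroup H] [Module F H] [FiniteDimensional F H]
    (r : ℕ) (N : Fin r → Module.End F H)
    (hcomm : ∀ i j, Commute (N i) (N j)) (hnil : ∀ i, IsNilpotent (N i))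
    (t : Fin r → F)
    (ε : Fin r → Finset (Fin r) → ℤ)
    (hε : ∀ i J, ε i J = (-1 : ℤ) ^ (J.filter (fun j => j < i)).card)
    (NI : Finset (Fin r) → Module.End F H)
    (hNI : ∀ I : Finset (Fin r), NI I = I.noncommProd N (fun i _ j _ _ => hcomm i j))
    (q : (Finset (Fin r) → H) → (Finset (Fin r) → Module.Dual F H) → F)
    (hq : ∀ a b, q a b = ∑ I : Finset (Fin r), (∏ i ∈ I, t i) * (b I) ((NI I) (a I)))
    (dH δH : (Finset (Fin r) → H) → (Finset (Fin r) → H))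
    (hdH : ∀ a J, dH a J = ∑ i ∈ J, ε i J • a (J.erase i))
    (hδH : ∀ a I, δH a I = ∑ k ∈ Iᶜ, ε k I • t k • (N k) (a (insert k I)))
    (dD δD : (Finset (Fin r) → Module.Dual F H) → (Finset (Fin r) → Module.Dual F H))
    (hdD : ∀ b J, dD b J = ∑ i ∈ J, ε i J • b (J.erase i))
    (hδD : ∀ b I, δD b I = ∑ k ∈ Iᶜ, ε k I • t k • (N k).dualMap (b (insert k I))) :
    ∀ (a : Finset (Fin r) → H) (b : Finset (Fin r) → Module.Dual F H),
      q (dH a) b = q a (δD b) ∧ q (δH a) b = q a (dD b) :=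
  stmt7_general F H r N hcomm t ε hε NI hNI q hq dH δH hdH hδH dD δD hdD hδD
end

section
/- Let B, C, A be abelian groups and U an extension of B ⊗ C by A. Let E be the pullback of U along the natural map B × C → B ⊗ C, (b,c) ↦ b ⊗ c. Then E, with the A-action by translation and the partial addition laws +₁ (adding fibers over fixed b ∈ B using addition in U) and +₂ (adding fibers over fixed c ∈ C), is a biextension of B × C by A. -/
open TensorProduct

/-- A (Mumford–Grothendieck) biextension of `B × C` by `A`: an `A`-torsor `π : E → B × C`
with partial composition laws `+₁` (on fibers over a fixed `b ∈ B`) and `+₂` (on fibers over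
a fixed `c ∈ C`) making each fiber `E_b` (resp. `E_c`) an abelian group surjecting onto `C`
(resp. `B`) with kernel `A`, satisfying the usual compatibility. -/
structure IsBiextension (A B C E : Type*) [AddCommGroup A] [AddCommGroup B] [AddCommGroup C]
    (π : E → B × C) (act : A → E → E) (add1 add2 : E → E → E) : Prop where
  -- `E` is an `A`-torsor over `B × C`
  act_pi : ∀ a e, π (act a e) = π e
  act_act : ∀ a a' e, act a (act a' e) = act (a + a') e
  pi_surj : Function.Surjective π
  torsor : ∀ e e', π e = π e' → ∃! a, act a e = e'
  -- `+₁` makes each `E_b` an abelian group, `E_b → C` a surjective homomorphism,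
  -- and `A → ker(E_b → C)`, `a ↦ a • 0_b`, a group isomorphism
  add1_pi : ∀ e e', (π e).1 = (π e').1 → π (add1 e e') = ((π e).1, (π e).2 + (π e').2)
  add1_comm : ∀ e e', (π e).1 = (π e').1 → add1 e e' = add1 e' e
  add1_assoc : ∀ e e' e'', (π e).1 = (π e').1 → (π e').1 = (π e'').1 →
      add1 (add1 e e') e'' = add1 e (add1 e' e'')
  add1_act : ∀ a e e', (π e).1 = (π e').1 → add1 (act a e) e' = act a (add1 e e')
  add1_zero : ∀ b : B, ∃ z, π z = (b, 0) ∧ ∀ e, (π e).1 = b → add1 z e = e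
  add1_neg : ∀ e, ∃ e', π e' = ((π e).1, -(π e).2) ∧
      ∀ g, (π g).1 = (π e).1 → add1 (add1 e e') g = g
  -- symmetrically for `+₂`
  add2_pi : ∀ e e', (π e).2 = (π e').2 → π (add2 e e') = ((π e).1 + (π e').1, (π e).2)
  add2_comm : ∀ e e', (π e).2 = (π e').2 → add2 e e' = add2 e' e
  add2_assoc : ∀ e e' e'', (π e).2 = (π e').2 → (π e').2 = (π e'').2 →
      add2 (add2 e e') e'' = add2 e (add2 e' e'')
  add2_act : ∀ a e e', (π e).2 = (π e').2 → add2 (act a e) e' = act a (add2 e e')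
  add2_zero : ∀ c : C, ∃ z, π z = (0, c) ∧ ∀ e, (π e).2 = c → add2 z e = e
  add2_neg : ∀ e, ∃ e', π e' = (-(π e).1, (π e).2) ∧
      ∀ g, (π g).2 = (π e).2 → add2 (add2 e e') g = g
  -- the compatibility between `+₁` and `+₂`
  compat : ∀ e11 e12 e21 e22,
      (π e11).1 = (π e12).1 → (π e21).1 = (π e22).1 →
      (π e11).2 = (π e21).2 → (π e12).2 = (π e22).2 →
      add2 (add1 e11 e12) (add1 e21 e22) = add1 (add2 e11 e21) (add2 e12 e22)

/-!
Nothing about the tensor product is used beyond the biadditivity of `(b, c) ↦ b ⊗ c`, so we work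
with the pullback of `p : U → T` along an arbitrary `ℤ`-bilinear `β : B × C → T`. Through `eval`,
`E` is the subset `{(u, b, c) | p u = β b c}` of `U × B × C`, and the action and both partial laws
are computed there componentwise, so every axiom reduces to an identity in `U × B × C`. Exactness
makes each fibre a single coset of `i(A)`, and `β b 0 = 0`, `β b (-c) = -β b c` put the neutral
elements and inverses of `+₁` in `E`. Replacing `β` by its flip exchanges `B` and `C`, and with
them `+₁` and `+₂`.
-/

structure IsTorsorOver {A X E : Type*} [Add A] (π : E → X) (act : A → E → E) : Prop where
  act_pi : ∀ a e, π (act a e) = π e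
  act_act : ∀ a a' e, act a (act a' e) = act (a + a') e
  surjective : Function.Surjective π
  existsUnique : ∀ e e', π e = π e' → ∃! a, act a e = e'

structure IsFiberwiseGroup {A K C E : Type*} [AddCommGroup C] (π : E → K × C) (act : A → E → E)
    (add : E → E → E) : Prop where
  pi_add : ∀ e e', (π e).1 = (π e').1 → π (add e e') = ((π e).1, (π e).2 + (π e').2)
  comm : ∀ e e', (π e).1 = (π e').1 → add e e' = add e' e
  assoc : ∀ e e' e'', (π e).1 = (π e').1 → (π e').1 = (π e'').1 →
      add (add e e') e'' = add e (add e' e'')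
  act_add : ∀ a e e', (π e).1 = (π e').1 → add (act a e) e' = act a (add e e')
  exists_zero : ∀ k : K, ∃ z, π z = (k, 0) ∧ ∀ e, (π e).1 = k → add z e = e
  exists_neg : ∀ e, ∃ e', π e' = ((π e).1, -(π e).2) ∧
      ∀ g, (π g).1 = (π e).1 → add (add e e') g = g

theorem IsBiextension.of_isFiberwiseGroup {A B C E : Type*} [AddCommGroup A] [AddCommGroup B]
    [AddCommGroup C] {π : E → B × C} {act : A → E → E} {add1 add2 : E → E → E}
    (hπ : IsTorsorOver π act) (h₁ : IsFiberwiseGroup π act add1)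
    (h₂ : IsFiberwiseGroup (Prod.swap ∘ π) act add2)
    (compat : ∀ e11 e12 e21 e22,
      (π e11).1 = (π e12).1 → (π e21).1 = (π e22).1 →
      (π e11).2 = (π e21).2 → (π e12).2 = (π e22).2 →
      add2 (add1 e11 e12) (add1 e21 e22) = add1 (add2 e11 e21) (add2 e12 e22)) :
    IsBiextension A B C E π act add1 add2 where
  act_pi := hπ.act_pi
  act_act := hπ.act_act
  pi_surj := hπ.surjective
  torsor := hπ.existsUnique
  add1_pi := h₁.pi_add
  add1_comm := h₁.comm
  add1_assoc := h₁.assoc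
  add1_act := h₁.act_add
  add1_zero := h₁.exists_zero
  add1_neg := h₁.exists_neg
  add2_pi e e' h := Prod.swap_injective (h₂.pi_add e e' h)
  add2_comm := h₂.comm
  add2_assoc := h₂.assoc
  add2_act := h₂.act_add
  add2_zero c := by
    obtain ⟨z, hz, hz0⟩ := h₂.exists_zero c
    exact ⟨z, Prod.swap_injective hz, hz0⟩
  add2_neg e := by
    obtain ⟨e', he', he'g⟩ := h₂.exists_neg e
    exact ⟨e', Prod.swap_injective he', he'g⟩
  compat := compat

section

variable {A B C T U E : Type*} [AddCommGroup B] [AddCommGroup C] [AddCommGroup T] [AddCommGroup U]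

theorem add2_add1_eq_add1_add2_of_injective {eval : E → U × B × C}
    (heval : Function.Injective eval) {add1 add2 : E → E → E}
    (hadd1 : ∀ e e', (eval e).2.1 = (eval e').2.1 →
      eval (add1 e e') = ((eval e).1 + (eval e').1, (eval e).2.1, (eval e).2.2 + (eval e').2.2))
    (hadd2 : ∀ e e', (eval e).2.2 = (eval e').2.2 →
      eval (add2 e e') = ((eval e).1 + (eval e').1, (eval e).2.1 + (eval e').2.1, (eval e).2.2))
    (e11 e12 e21 e22 : E) (hb1 : (eval e11).2.1 = (eval e12).2.1)
    (hb2 : (eval e21).2.1 = (eval e22).2.1) (hc1 : (eval e11).2.2 = (eval e21).2.2)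
    (hc2 : (eval e12).2.2 = (eval e22).2.2) :
    add2 (add1 e11 e12) (add1 e21 e22) = add1 (add2 e11 e21) (add2 e12 e22) := heval <| by
  have hc : (eval (add1 e11 e12)).2.2 = (eval (add1 e21 e22)).2.2 := by
    rw [hadd1 _ _ hb1, hadd1 _ _ hb2, hc1, hc2]
  have hb : (eval (add2 e11 e21)).2.1 = (eval (add2 e12 e22)).2.1 := by
    rw [hadd2 _ _ hc1, hadd2 _ _ hc2, hb1, hb2]
  simp only [hadd2 _ _ hc, hadd1 _ _ hb, hadd1 _ _ hb1, hadd1 _ _ hb2, hadd2 _ _ hc1,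
    hadd2 _ _ hc2, hb1, hc2, Prod.mk.injEq, and_true]
  abel

structure IsPullbackEmbedding (β : B →ₗ[ℤ] C →ₗ[ℤ] T) (p : U →+ T) (eval : E → U × B × C) :
    Prop where
  injective : Function.Injective eval
  range_eq : Set.range eval = {x | p x.1 = β x.2.1 x.2.2}

namespace IsPullbackEmbedding

variable {β : B →ₗ[ℤ] C →ₗ[ℤ] T} {p : U →+ T} {eval : E → U × B × C} {act : A → E → E}

theorem map_eval (hE : IsPullbackEmbedding β p eval) (e : E) :
    p (eval e).1 = β (eval e).2.1 (eval e).2.2 :=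
  (hE.range_eq ▸ Set.mem_range_self e : eval e ∈ {x | p x.1 = β x.2.1 x.2.2})

theorem exists_eval_eq (hE : IsPullbackEmbedding β p eval) {x : U × B × C}
    (hx : p x.1 = β x.2.1 x.2.2) : ∃ e, eval e = x :=
  (hE.range_eq ▸ hx : x ∈ Set.range eval)

theorem flip (hE : IsPullbackEmbedding β p eval) :
    IsPullbackEmbedding β.flip p (fun e => ((eval e).1, (eval e).2.swap)) where
  injective := (Function.Injective.prodMap Function.injective_id Prod.swap_injective).comp
    hE.injective
  range_eq := by
    ext ⟨u, c, b⟩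
    constructor
    · rintro ⟨e, he⟩
      simp only [Prod.mk.injEq, Prod.swap] at he
      obtain ⟨rfl, rfl, rfl⟩ := he
      exact hE.map_eval e
    · intro hx
      obtain ⟨e, he⟩ := hE.exists_eval_eq (x := (u, b, c)) hx
      exact ⟨e, by simp [he]⟩

theorem isTorsorOver [AddCommGroup A] (hE : IsPullbackEmbedding β p eval) {i : A →+ U}
    (hi : Function.Injective i) (hp : Function.Surjective p)
    (hker : ∀ u, p u = 0 → u ∈ Set.range i)
    (hact : ∀ a e, eval (act a e) = ((eval e).1 + i a, (eval e).2)) :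
    IsTorsorOver (fun e => (eval e).2) act where
  act_pi a e := by simp only [hact]
  act_act a a' e := hE.injective <| by rw [hact, hact, hact, map_add, add_assoc, add_comm (i a')]
  surjective := by
    rintro ⟨b, c⟩
    obtain ⟨u, hu⟩ := hp (β b c)
    obtain ⟨e, he⟩ := hE.exists_eval_eq (x := (u, b, c)) hu
    exact ⟨e, by simp [he]⟩
  existsUnique e e' h := by
    have hdiff : p ((eval e').1 - (eval e).1) = 0 := by
      simp only [map_sub, hE.map_eval, h, sub_self]
    obtain ⟨a, ha⟩ := hker _ hdiff
    refine ⟨a, hE.injective ?_, fun a' ha' => hi ?_⟩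
    · rw [hact, ha, add_sub_cancel, h]
    · rw [ha, ← ha', hact, add_sub_cancel_left]

theorem isFiberwiseGroup (hE : IsPullbackEmbedding β p eval) {i : A → U}
    (hact : ∀ a e, eval (act a e) = ((eval e).1 + i a, (eval e).2)) {add : E → E → E}
    (hadd : ∀ e e', (eval e).2.1 = (eval e').2.1 →
      eval (add e e') = ((eval e).1 + (eval e').1, (eval e).2.1, (eval e).2.2 + (eval e').2.2)) :
    IsFiberwiseGroup (fun e => (eval e).2) act add where
  pi_add e e' h := by simp only [hadd e e' h]
  comm e e' h := hE.injective <| by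
    rw [hadd e e' h, hadd e' e h.symm, h, add_comm (eval e).1, add_comm (eval e).2.2]
  assoc e e' e'' h h' := hE.injective <| by
    have hl : (eval (add e e')).2.1 = (eval e'').2.1 := by rw [hadd e e' h, h, h']
    have hr : (eval e).2.1 = (eval (add e' e'')).2.1 := by rw [hadd e' e'' h', h]
    simp only [hadd _ _ hl, hadd _ _ hr, hadd e e' h, hadd e' e'' h', add_assoc]
  act_add a e e' h := hE.injective <| by
    have ha : (eval (act a e)).2.1 = (eval e').2.1 := by rw [hact, h]
    rw [hadd _ _ ha, hact, hact, hadd e e' h, add_right_comm]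
  exists_zero b := by
    obtain ⟨z, hz⟩ := hE.exists_eval_eq (x := (0, b, 0)) (by simp)
    refine ⟨z, by simp [hz], fun e he => hE.injective ?_⟩
    have hze : (eval z).2.1 = (eval e).2.1 := by rw [hz, he]
    simp [hadd _ _ hze, hz, ← he]
  exists_neg e := by
    obtain ⟨e', he'⟩ := hE.exists_eval_eq (x := (-(eval e).1, (eval e).2.1, -(eval e).2.2))
      (by simp [hE.map_eval])
    refine ⟨e', by simp [he'], fun g hg => hE.injective ?_⟩
    have hee' : (eval e).2.1 = (eval e').2.1 := by rw [he']
    have hsum : (eval (add e e')).2.1 = (eval g).2.1 := by rw [hadd _ _ hee', hg]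
    simp [hadd _ _ hsum, hadd _ _ hee', he', ← hg]

theorem isBiextension [AddCommGroup A] (hE : IsPullbackEmbedding β p eval) {i : A →+ U}
    (hi : Function.Injective i) (hp : Function.Surjective p)
    (hker : ∀ u, p u = 0 → u ∈ Set.range i)
    (hact : ∀ a e, eval (act a e) = ((eval e).1 + i a, (eval e).2)) {add1 add2 : E → E → E}
    (hadd1 : ∀ e e', (eval e).2.1 = (eval e').2.1 →
      eval (add1 e e') = ((eval e).1 + (eval e').1, (eval e).2.1, (eval e).2.2 + (eval e').2.2))
    (hadd2 : ∀ e e', (eval e).2.2 = (eval e').2.2 →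
      eval (add2 e e') = ((eval e).1 + (eval e').1, (eval e).2.1 + (eval e').2.1, (eval e).2.2)) :
    IsBiextension A B C E (fun e => (eval e).2) act add1 add2 :=
  .of_isFiberwiseGroup (hE.isTorsorOver hi hp hker hact) (hE.isFiberwiseGroup hact hadd1)
    (hE.flip.isFiberwiseGroup (i := i) (by simp [hact]) fun e e' h => by simp [hadd2 e e' h])
    (add2_add1_eq_add1_add2_of_injective hE.injective hadd1 hadd2)

end IsPullbackEmbedding

end

/-- Let `B, C, A` be abelian groups and `U` an extension of `B ⊗ C` by `A`
(via `i : A → U` injective, `p : U → B ⊗ C` surjective, with `range i = ker p`).  Let `E` be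
the pullback of `U` to `B × C` along `(b,c) ↦ b ⊗ c`.  Then `E`, with the `A`-action by
translation and the partial addition laws `+₁` and `+₂` defined using the addition of `U`,
is a biextension of `B × C` by `A`. -/
theorem stmt12 (A B C U : Type*) [AddCommGroup A] [AddCommGroup B] [AddCommGroup C]
    [AddCommGroup U]
    (i : A →+ U) (p : U →+ (B ⊗[ℤ] C))
    (hi : Function.Injective i) (hp : Function.Surjective p)
    (hexact : ∀ u : U, p u = 0 ↔ u ∈ Set.range i)
    -- `E` is (in bijection with) the pullback `{x : U × B × C // p x.1 = x.2.1 ⊗ₜ x.2.2}`: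
    (E : Type*)
    (emk : ∀ x : U × B × C, p x.1 = x.2.1 ⊗ₜ[ℤ] x.2.2 → E)
    (eval : E → U × B × C)
    (heval : ∀ x hx, eval (emk x hx) = x)
    (hext : ∀ e e' : E, eval e = eval e' → e = e')
    (hval : ∀ e : E, p (eval e).1 = (eval e).2.1 ⊗ₜ[ℤ] (eval e).2.2)
    (π : E → B × C) (hπ : ∀ e, π e = (eval e).2)
    (act : A → E → E)
    (hact : ∀ a e, eval (act a e) = ((eval e).1 + i a, (eval e).2))
    (add1 : E → E → E)
    (hadd1 : ∀ e e', (eval e).2.1 = (eval e').2.1 →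
        eval (add1 e e') =
          ((eval e).1 + (eval e').1, (eval e).2.1, (eval e).2.2 + (eval e').2.2))
    (add2 : E → E → E)
    (hadd2 : ∀ e e', (eval e).2.2 = (eval e').2.2 →
        eval (add2 e e') =
          ((eval e).1 + (eval e').1, (eval e).2.1 + (eval e').2.1, (eval e).2.2)) :
    IsBiextension A B C E π act add1 add2 := by
  obtain rfl : π = fun e => (eval e).2 := funext hπ
  have hE : IsPullbackEmbedding (TensorProduct.mk ℤ B C) p eval :=
    ⟨fun e e' => hext e e', Set.ext fun x => ⟨by rintro ⟨e, rfl⟩; exact hval e,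
      fun hx => ⟨emk x hx, heval x hx⟩⟩⟩
  exact hE.isBiextension hi hp (fun u => (hexact u).1) hact hadd1 hadd2
end

section
/- With H, Q, θ, u, c as above, define I: Λ³H → Λ³H by I(ω) = (g−1)ω − u(c(ω)). Then ker(I) = im(u), and moreover Λ³H decomposes as the direct sum u(H) ⊕ L, where L is the subgroup generated by (1) all vᵢ∧vⱼ∧v_k with v_l ∈ {e_l, f_l} and i<j<k, and (2) all vᵢ∧eⱼ∧fⱼ with vᵢ ∈ {eᵢ,fᵢ} and i−j not congruent to 0 or 1 modulo g. In particular V := Λ³H / u(H) is torsion free. -/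
/-!
Write `eᵢ = b (inl i)`, `fᵢ = b (inr i)`, let `πₖ` be the projection of `H` onto `⟨eₖ, fₖ⟩` and
`κₘ` the contraction of `Λ³H` with `eₘ* ∧ fₘ*`. The map `φ = ∑ₘ πₘ₊₁ ∘ κₘ : Λ³H → H` sends
`eⱼ ∧ fⱼ ∧ z` to `πⱼ₊₁ z` (this needs `j + 1 ≠ j`, i.e. `g ≥ 2`). Hence `φ ∘ u = id`, and `φ` kills
every generator of `L`: those of type (1) have no two factors on a common level, and those of
type (2) are `x ∧ eⱼ ∧ fⱼ` with `x` off level `j + 1`. So `u(H) ∩ L = 0`, and as `Λ³H` is free,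
`n • ω = u z` forces `ω = u (φ ω)`, which gives torsion-freeness of `Λ³H / u(H)`. Together with
`c ∘ u = (g - 1) id` this also gives `ker I = im u`.

Finally `Λ³H = u(H) + L`: the only increasing basis wedges not visibly in `L` are
`x ∧ eⱼ ∧ fⱼ` with `x` on level `j + 1`, and such a wedge is `u(x)` minus generators of type (2).
-/

open ExteriorAlgebra

noncomputable section

section Retraction

variable {R M N : Type*} [CommRing R] [AddCommGroup M] [Module R M] [AddCommGroup N] [Module R N]
  {u : N →ₗ[R] M} {φ : M →ₗ[R] N}

theorem disjoint_range_of_leftInverse (h : Function.LeftInverse φ u) {L : Submodule R M}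
    (hL : L ≤ LinearMap.ker φ) : Disjoint (LinearMap.range u) L := by
  rw [Submodule.disjoint_def]
  rintro _ ⟨z, rfl⟩ hz
  rw [← h z, hL hz, map_zero]

theorem mem_range_of_smul_mem_range_of_leftInverse [IsDomain R] [Module.IsTorsionFree R M]
    (h : Function.LeftInverse φ u) {n : R} (hn : n ≠ 0) {ω : M} (hω : n • ω ∈ LinearMap.range u) :
    ω ∈ LinearMap.range u := by
  obtain ⟨z, hz⟩ := hω
  have hφ : z = n • φ ω := by rw [← h z, hz, map_smul]
  refine ⟨φ ω, (smul_right_injective M hn (?_ : n • ω = n • u (φ ω))).symm⟩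
  rw [← hz, hφ, map_smul]

end Retraction

theorem Fin.add_one_ne_self_of_two_le {n : ℕ} [NeZero n] (hn : 2 ≤ n) (j : Fin n) : j + 1 ≠ j :=
  fun h => by have := Fin.one_eq_zero_iff.mp (add_eq_left.mp h); omega

theorem Fin.intCast_dvd_sub_iff_eq {n : ℕ} (i j : Fin n) : (n : ℤ) ∣ (i : ℤ) - j ↔ i = j := by
  rw [← Nat.modEq_iff_dvd, Nat.ModEq, Nat.mod_eq_of_lt i.isLt, Nat.mod_eq_of_lt j.isLt, eq_comm,
    Fin.val_inj]

theorem Fin.intCast_dvd_sub_sub_one_iff_eq_add_one {n : ℕ} [NeZero n] (i j : Fin n) :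
    (n : ℤ) ∣ (i : ℤ) - j - 1 ↔ i = j + 1 := by
  rw [sub_sub, show (j : ℤ) + 1 = ((j + 1 : ℕ) : ℤ) by push_cast; rfl, ← Nat.modEq_iff_dvd,
    Nat.ModEq, Nat.mod_eq_of_lt i.isLt, ← Fin.val_inj, Fin.val_add, Fin.val_one', Nat.add_mod_mod,
    eq_comm]

section ThreeVectors

variable {R H : Type*} [CommRing R] [AddCommGroup H] [Module R H]

def contractPair (α β : Module.Dual R H) : ExteriorAlgebra R H →ₗ[R] H :=
  ιInv ∘ₗ CliffordAlgebra.contractLeft β ∘ₗ CliffordAlgebra.contractLeft α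

theorem contractPair_ιMulti (α β : Module.Dual R H) (x y z : H) :
    contractPair α β (ιMulti R 3 ![x, y, z]) =
      (α x * β y - α y * β x) • z - (α x * β z - α z * β x) • y
        + (α y * β z - α z * β y) • x := by
  have hι : ∀ w : H, ιInv (ι R w) = w := ι_leftInverse
  simp only [contractPair, ιMulti_apply, List.ofFn_succ, List.ofFn_zero, List.prod_cons,
    List.prod_nil, mul_one, LinearMap.comp_apply, ExteriorAlgebra.ι,
    CliffordAlgebra.contractLeft_ι_mul, CliffordAlgebra.contractLeft_ι, map_sub, map_smul,
    Algebra.algebraMap_eq_smul_one, mul_smul_comm, mul_sub] at hι ⊢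
  simp only [hι, Matrix.cons_val_succ, Matrix.cons_val_zero]
  module

theorem ιMulti_rotate (x y z : H) : ιMulti R 3 ![z, x, y] = ιMulti R 3 ![x, y, z] := by
  have h := (ιMulti R 3).map_perm ![z, x, y] (finRotate 3)
  have hv : ![z, x, y] ∘ finRotate 3 = ![x, y, z] := by ext i; fin_cases i <;> rfl
  rw [hv, sign_finRotate] at h
  simpa using h.symm

end ThreeVectors

section SymplecticBasis

variable {R H : Type*} [CommRing R] [AddCommGroup H] [Module R H] {g : ℕ}
  (b : Module.Basis (Fin g ⊕ Fin g) R H)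

def basisPair (i : Fin g) : Set H := {b (.inl i), b (.inr i)}

theorem coord_eq_zero_of_mem_basisPair {i m : Fin g} (h : i ≠ m) {x : H}
    (hx : x ∈ basisPair b i) : b.coord (.inl m) x = 0 ∧ b.coord (.inr m) x = 0 := by
  rcases hx with rfl | rfl <;> simp [h]

def levelProj (m : Fin g) : H →ₗ[R] H :=
  (b.coord (.inl m)).smulRight (b (.inl m)) + (b.coord (.inr m)).smulRight (b (.inr m))

theorem levelProj_of_mem_basisPair {i : Fin g} {x : H} (hx : x ∈ basisPair b i) (m : Fin g) :
    levelProj b m x = if i = m then x else 0 := by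
  by_cases h : i = m
  · subst h
    rcases hx with rfl | rfl <;> simp [levelProj]
  · obtain ⟨h₁, h₂⟩ := coord_eq_zero_of_mem_basisPair b h hx
    simp [levelProj, h, h₁, h₂]

theorem sum_levelProj (z : H) : ∑ m, levelProj b m z = z := by
  conv_rhs => rw [← b.sum_repr z, Fintype.sum_sum_type]
  simp [levelProj, Finset.sum_add_distrib]

theorem levelProj_levelProj_of_ne {j m : Fin g} (h : j ≠ m) (z : H) :
    levelProj b m (levelProj b j z) = 0 := by
  have he := levelProj_of_mem_basisPair b (i := j) (Or.inl rfl) m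
  have hf := levelProj_of_mem_basisPair b (i := j) (Or.inr rfl) m
  rw [if_neg h] at he hf
  have hz : levelProj b j z = b.coord (.inl j) z • b (.inl j) + b.coord (.inr j) z • b (.inr j) :=
    rfl
  simp [hz, he, hf]

theorem contractPair_coord_ιMulti_basisPair (m j : Fin g) (z : H) :
    contractPair (b.coord (.inl m)) (b.coord (.inr m)) (ιMulti R 3 ![b (.inl j), b (.inr j), z]) =
      if j = m then z - levelProj b j z else 0 := by
  rw [contractPair_ιMulti]
  by_cases h : j = m
  · subst h
    simp only [Module.Basis.coord_apply, Module.Basis.repr_self, Finsupp.single_eq_same,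
      Finsupp.single_eq_of_ne Sum.inr_ne_inl, Finsupp.single_eq_of_ne Sum.inl_ne_inr, levelProj,
      LinearMap.add_apply, LinearMap.smulRight_apply, if_true]
    module
  · simp [h]

theorem ιMulti_basisPair_self {j : Fin g} {x : H} (hx : x ∈ basisPair b j) :
    ιMulti R 3 ![x, b (.inl j), b (.inr j)] = 0 := by
  rcases hx with rfl | rfl
  · exact (ιMulti R 3).map_eq_zero_of_eq _ (i := 0) (j := 1) rfl (by decide)
  · exact (ιMulti R 3).map_eq_zero_of_eq _ (i := 0) (j := 2) rfl (by decide)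

def wedgesOfDistinctLevels : Set (ExteriorAlgebra R H) :=
  {w | ∃ i j k : Fin g, i < j ∧ j < k ∧ ∃ x ∈ basisPair b i, ∃ y ∈ basisPair b j,
    ∃ z ∈ basisPair b k, w = ιMulti R 3 ![x, y, z]}

def wedgesWithDistantPair : Set (ExteriorAlgebra R H) :=
  {w | ∃ i j : Fin g, ¬ (g : ℤ) ∣ (i : ℤ) - j ∧ ¬ (g : ℤ) ∣ (i : ℤ) - j - 1 ∧
    ∃ x ∈ basisPair b i, w = ιMulti R 3 ![x, b (.inl j), b (.inr j)]}

def wedgeComplement : Submodule R (ExteriorAlgebra R H) :=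
  Submodule.span R (wedgesOfDistinctLevels b ∪ wedgesWithDistantPair b)

theorem wedgeComplement_le_fixedDegree : wedgeComplement b ≤ ⋀[R]^3 H := by
  refine Submodule.span_le.mpr ?_
  rintro _ (⟨-, -, -, -, -, x, -, y, -, z, -, rfl⟩ | ⟨-, -, -, -, x, -, rfl⟩) <;>
    exact ιMulti_range R 3 (Set.mem_range_self _)

/-- The basis ordered as `e₀ < f₀ < e₁ < f₁ < ⋯`, so that in an increasing triple two vectors of
the same level are adjacent and equal to `eⱼ, fⱼ` in this order. -/
def levelFamily (p : Lex (Fin g × Bool)) : H :=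
  b (if (ofLex p).2 then .inr (ofLex p).1 else .inl (ofLex p).1)

theorem levelFamily_mem_basisPair (p : Lex (Fin g × Bool)) :
    levelFamily b p ∈ basisPair b (ofLex p).1 := by
  unfold levelFamily
  split_ifs
  exacts [Or.inr rfl, Or.inl rfl]

theorem span_range_levelFamily : Submodule.span R (Set.range (levelFamily b)) = ⊤ := by
  refine eq_top_iff.mpr (b.span_eq ▸ Submodule.span_mono ?_)
  rintro _ ⟨i | i, rfl⟩
  exacts [⟨toLex (i, false), rfl⟩, ⟨toLex (i, true), rfl⟩]

theorem levelFamily_of_lt_of_fst_eq {p q : Lex (Fin g × Bool)} (h₁ : (ofLex p).1 = (ofLex q).1)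
    (h₂ : (ofLex p).2 < (ofLex q).2) :
    levelFamily b p = b (.inl (ofLex q).1) ∧ levelFamily b q = b (.inr (ofLex q).1) := by
  obtain ⟨hp, hq⟩ := Bool.lt_iff.mp h₂
  simp [levelFamily, hp, hq, h₁]

theorem sum_symplectic_expansion {Q : H →ₗ[R] H →ₗ[R] R} (hQalt : Q.IsAlt)
    (hQef : ∀ i j, Q (b (.inl i)) (b (.inr j)) = if i = j then 1 else 0)
    (hQee : ∀ i j, Q (b (.inl i)) (b (.inl j)) = 0)
    (hQff : ∀ i j, Q (b (.inr i)) (b (.inr j)) = 0) (z : H) :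
    ∑ i, (Q z (b (.inr i)) • b (.inl i) - Q z (b (.inl i)) • b (.inr i)) = z := by
  have hQfe (i j : Fin g) : Q (b (.inr i)) (b (.inl j)) = -if j = i then 1 else 0 := by
    rw [← hQalt.neg, hQef]
  suffices ∑ i, ((Q.flip (b (.inr i))).smulRight (b (.inl i))
      - (Q.flip (b (.inl i))).smulRight (b (.inr i))) = LinearMap.id by
    simpa using LinearMap.congr_fun this z
  refine b.ext fun a => ?_
  rcases a with j | j <;> simp [hQef, hQee, hQff, hQfe]

theorem map_sum_ιMulti_basisPair_of_contraction {Q : H →ₗ[R] H →ₗ[R] R} (hQalt : Q.IsAlt)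
    (hQef : ∀ i j, Q (b (.inl i)) (b (.inr j)) = if i = j then 1 else 0)
    (hQee : ∀ i j, Q (b (.inl i)) (b (.inl j)) = 0)
    (hQff : ∀ i j, Q (b (.inr i)) (b (.inr j)) = 0) {c : ExteriorAlgebra R H →ₗ[R] H}
    (hc : ∀ v : Fin 3 → H,
      c (ιMulti R 3 v) = Q (v 0) (v 1) • v 2 + Q (v 1) (v 2) • v 0 + Q (v 2) (v 0) • v 1)
    (z : H) : c (∑ i, ιMulti R 3 ![b (.inl i), b (.inr i), z]) = ((g : R) - 1) • z := by
  have hterm (i : Fin g) : c (ιMulti R 3 ![b (.inl i), b (.inr i), z]) =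
      z - (Q z (b (.inr i)) • b (.inl i) - Q z (b (.inl i)) • b (.inr i)) := by
    simp only [hc, Matrix.cons_val_zero, Matrix.cons_val_one, Matrix.cons_val_two,
      Matrix.head_cons, Matrix.tail_cons, hQef, ↓reduceIte, one_smul, ← hQalt.neg z, neg_smul]
    abel
  rw [map_sum, Finset.sum_congr rfl fun i _ => hterm i, Finset.sum_sub_distrib,
    sum_symplectic_expansion b hQalt hQef hQee hQff, Finset.sum_const, Finset.card_univ,
    Fintype.card_fin, sub_smul, one_smul, Nat.cast_smul_eq_nsmul]

variable [NeZero g]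

def thetaRetraction : ExteriorAlgebra R H →ₗ[R] H :=
  ∑ m, levelProj b (m + 1) ∘ₗ contractPair (b.coord (.inl m)) (b.coord (.inr m))

theorem thetaRetraction_ιMulti_basisPair (hg : 2 ≤ g) (j : Fin g) (z : H) :
    thetaRetraction b (ιMulti R 3 ![b (.inl j), b (.inr j), z]) = levelProj b (j + 1) z := by
  simp only [thetaRetraction, LinearMap.coe_sum, Finset.sum_apply, LinearMap.comp_apply,
    contractPair_coord_ιMulti_basisPair, apply_ite, map_zero, Finset.sum_ite_eq,
    Finset.mem_univ, if_true, map_sub,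
    levelProj_levelProj_of_ne b (Fin.add_one_ne_self_of_two_le hg j).symm, sub_zero]

theorem thetaRetraction_sum_ιMulti_basisPair (hg : 2 ≤ g) (z : H) :
    thetaRetraction b (∑ i, ιMulti R 3 ![b (.inl i), b (.inr i), z]) = z := by
  simp only [map_sum, thetaRetraction_ιMulti_basisPair b hg]
  exact (Equiv.sum_comp (Equiv.addRight 1) (fun m => levelProj b m z)).trans (sum_levelProj b z)

theorem thetaRetraction_ιMulti_of_ne_add_one (hg : 2 ≤ g) {i j : Fin g} (h : i ≠ j + 1) {x : H}
    (hx : x ∈ basisPair b i) :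
    thetaRetraction b (ιMulti R 3 ![x, b (.inl j), b (.inr j)]) = 0 := by
  rw [ιMulti_rotate, thetaRetraction_ιMulti_basisPair b hg, levelProj_of_mem_basisPair b hx,
    if_neg h]

theorem thetaRetraction_ιMulti_of_pairwise_ne {p q r : Fin g} (hpq : p ≠ q) (hpr : p ≠ r)
    (hqr : q ≠ r) {x y z : H} (hx : x ∈ basisPair b p) (hy : y ∈ basisPair b q)
    (hz : z ∈ basisPair b r) : thetaRetraction b (ιMulti R 3 ![x, y, z]) = 0 := by
  simp only [thetaRetraction, LinearMap.coe_sum, Finset.sum_apply, LinearMap.comp_apply,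
    contractPair_ιMulti]
  refine Finset.sum_eq_zero fun m _ => ?_
  by_cases hp : p = m
  · subst hp
    obtain ⟨hy₁, hy₂⟩ := coord_eq_zero_of_mem_basisPair b hpq.symm hy
    obtain ⟨hz₁, hz₂⟩ := coord_eq_zero_of_mem_basisPair b hpr.symm hz
    simp [hy₁, hy₂, hz₁, hz₂]
  obtain ⟨hx₁, hx₂⟩ := coord_eq_zero_of_mem_basisPair b hp hx
  by_cases hq : q = m
  · subst hq
    obtain ⟨hz₁, hz₂⟩ := coord_eq_zero_of_mem_basisPair b hqr.symm hz
    simp [hx₁, hx₂, hz₁, hz₂]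
  obtain ⟨hy₁, hy₂⟩ := coord_eq_zero_of_mem_basisPair b hq hy
  simp [hx₁, hx₂, hy₁, hy₂]

theorem wedgeComplement_le_ker_thetaRetraction (hg : 2 ≤ g) :
    wedgeComplement b ≤ LinearMap.ker (thetaRetraction b) := by
  refine Submodule.span_le.mpr ?_
  rintro _ (⟨i, j, k, hij, hjk, x, hx, y, hy, z, hz, rfl⟩ | ⟨i, j, -, hij, x, hx, rfl⟩)
  · exact thetaRetraction_ιMulti_of_pairwise_ne b hij.ne (hij.trans hjk).ne hjk.ne hx hy hz
  · exact thetaRetraction_ιMulti_of_ne_add_one b hg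
      (mt (Fin.intCast_dvd_sub_sub_one_iff_eq_add_one i j).mpr hij) hx

theorem ιMulti_mem_wedgeComplement_of_ne_add_one {i j : Fin g} (h : i ≠ j + 1) {x : H}
    (hx : x ∈ basisPair b i) : ιMulti R 3 ![x, b (.inl j), b (.inr j)] ∈ wedgeComplement b := by
  by_cases hij : i = j
  · subst hij
    rw [ιMulti_basisPair_self b hx]
    exact zero_mem _
  refine Submodule.subset_span (Or.inr ⟨i, j, ?_, ?_, x, hx, rfl⟩)
  · rwa [Fin.intCast_dvd_sub_iff_eq]
  · rwa [Fin.intCast_dvd_sub_sub_one_iff_eq_add_one]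

variable {u : H →ₗ[R] ExteriorAlgebra R H}

theorem ιMulti_mem_sup_wedgeComplement
    (hu : ∀ z, u z = ∑ i, ιMulti R 3 ![b (.inl i), b (.inr i), z]) {i : Fin g} {x : H}
    (hx : x ∈ basisPair b i) (j : Fin g) :
    ιMulti R 3 ![x, b (.inl j), b (.inr j)] ∈ LinearMap.range u ⊔ wedgeComplement b := by
  by_cases h : i = j + 1
  · subst h
    rw [ιMulti_rotate, eq_sub_of_add_eq (Finset.add_sum_erase Finset.univ
      (fun m => ιMulti R 3 ![b (.inl m), b (.inr m), x]) (Finset.mem_univ j)), ← hu]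
    refine sub_mem (Submodule.mem_sup_left ⟨x, rfl⟩) (sum_mem fun m hm => ?_)
    rw [← ιMulti_rotate]
    refine Submodule.mem_sup_right (ιMulti_mem_wedgeComplement_of_ne_add_one b ?_ hx)
    exact fun h => Finset.ne_of_mem_erase hm (add_right_cancel h).symm
  · exact Submodule.mem_sup_right (ιMulti_mem_wedgeComplement_of_ne_add_one b h hx)

theorem ιMulti_levelFamily_mem_sup_wedgeComplement
    (hu : ∀ z, u z = ∑ i, ιMulti R 3 ![b (.inl i), b (.inr i), z])
    {p q r : Lex (Fin g × Bool)} (hpq : p < q) (hqr : q < r) :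
    ιMulti R 3 ![levelFamily b p, levelFamily b q, levelFamily b r] ∈
      LinearMap.range u ⊔ wedgeComplement b := by
  rw [Prod.Lex.lt_iff] at hpq hqr
  rcases hpq with hpq | ⟨hpq₁, hpq₂⟩
  · rcases hqr with hqr | ⟨hqr₁, hqr₂⟩
    · refine Submodule.mem_sup_right (Submodule.subset_span (Or.inl ?_))
      exact ⟨_, _, _, hpq, hqr, _, levelFamily_mem_basisPair b p, _,
        levelFamily_mem_basisPair b q, _, levelFamily_mem_basisPair b r, rfl⟩
    · obtain ⟨hq, hr⟩ := levelFamily_of_lt_of_fst_eq b hqr₁ hqr₂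
      rw [hq, hr]
      exact ιMulti_mem_sup_wedgeComplement b hu (levelFamily_mem_basisPair b p) _
  · obtain ⟨hp, hq⟩ := levelFamily_of_lt_of_fst_eq b hpq₁ hpq₂
    rw [hp, hq, ← ιMulti_rotate]
    exact ιMulti_mem_sup_wedgeComplement b hu (levelFamily_mem_basisPair b r) _

theorem fixedDegree_three_le_sup_wedgeComplement
    (hu : ∀ z, u z = ∑ i, ιMulti R 3 ![b (.inl i), b (.inr i), z]) :
    ⋀[R]^3 H ≤ LinearMap.range u ⊔ wedgeComplement b := by
  rw [← exteriorPower.ιMulti_family_span_fixedDegree_of_span R (span_range_levelFamily b),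
    Submodule.span_le]
  rintro _ ⟨s, rfl⟩
  set σ := Set.powersetCard.ofFinEmbEquiv.symm s
  have hσ : levelFamily b ∘ σ =
      ![levelFamily b (σ 0), levelFamily b (σ 1), levelFamily b (σ 2)] := by
    ext k; fin_cases k <;> rfl
  rw [SetLike.mem_coe, ιMulti_family, hσ]
  exact ιMulti_levelFamily_mem_sup_wedgeComplement b hu (σ.strictMono (by decide))
    (σ.strictMono (by decide))

end SymplecticBasis

end

/-- With `H, Q, θ, u, c` as in the symplectic setting (`H` free of rank `2g`
with symplectic basis `e, f`; `u(x) = θ∧x`; `c(x∧y∧z) = Q(x,y)z + Q(y,z)x + Q(z,x)y`),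
define `I : Λ³H → Λ³H` by `I(ω) = (g−1)ω − u(c(ω))`.  Then `ker I = im u`, and `Λ³H`
decomposes as `u(H) ⊕ L` where `L` is spanned by (1) all `vᵢ∧vⱼ∧v_k` with `v_l ∈ {e_l, f_l}`
and `i<j<k`, and (2) all `vᵢ∧eⱼ∧fⱼ` with `vᵢ ∈ {eᵢ, fᵢ}` and `i−j ≢ 0, 1 (mod g)`.
In particular `V = Λ³H / u(H)` is torsion free. -/
theorem stmt16 (g : ℕ) (hg : 2 ≤ g) (H : Type*) [AddCommGroup H] [Module ℤ H]
    (e f : Fin g → H) (b : Module.Basis (Fin g ⊕ Fin g) ℤ H)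
    (hbe : ∀ i, b (Sum.inl i) = e i) (hbf : ∀ i, b (Sum.inr i) = f i)
    (Q : H →ₗ[ℤ] H →ₗ[ℤ] ℤ)
    (hQalt : ∀ x, Q x x = 0)
    (hQef : ∀ i j, Q (e i) (f j) = if i = j then 1 else 0)
    (hQee : ∀ i j, Q (e i) (e j) = 0) (hQff : ∀ i j, Q (f i) (f j) = 0)
    (u : H →ₗ[ℤ] ExteriorAlgebra ℤ H)
    (hu : ∀ x, u x = ∑ i : Fin g, ExteriorAlgebra.ιMulti ℤ 3 ![e i, f i, x])
    (c : ExteriorAlgebra ℤ H →ₗ[ℤ] H)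
    (hc : ∀ v : Fin 3 → H, c (ExteriorAlgebra.ιMulti ℤ 3 v) =
        Q (v 0) (v 1) • (v 2) + Q (v 1) (v 2) • (v 0) + Q (v 2) (v 0) • (v 1))
    (S₁ S₂ : Set (ExteriorAlgebra ℤ H))
    (hS₁ : S₁ = {w | ∃ i j k : Fin g, i < j ∧ j < k ∧
        ∃ x ∈ ({e i, f i} : Set H), ∃ y ∈ ({e j, f j} : Set H), ∃ z ∈ ({e k, f k} : Set H),
          w = ExteriorAlgebra.ιMulti ℤ 3 ![x, y, z]})
    (hS₂ : S₂ = {w | ∃ i j : Fin g,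
        ¬ ((g : ℤ) ∣ ((i : ℤ) - (j : ℤ))) ∧ ¬ ((g : ℤ) ∣ ((i : ℤ) - (j : ℤ) - 1)) ∧
        ∃ x ∈ ({e i, f i} : Set H), w = ExteriorAlgebra.ιMulti ℤ 3 ![x, e j, f j]})
    (L : Submodule ℤ (ExteriorAlgebra ℤ H)) (hL : L = Submodule.span ℤ (S₁ ∪ S₂)) :
    -- (a), (b): ker I = im u inside Λ³H
    (∀ ω ∈ (⋀[ℤ]^3 H : Submodule ℤ (ExteriorAlgebra ℤ H)),
        (((g : ℤ) - 1) • ω - u (c ω) = 0 ↔ ω ∈ LinearMap.range u)) ∧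
    -- (c): Λ³H = u(H) ⊕ L
    Disjoint (LinearMap.range u) L ∧
    LinearMap.range u ⊔ L = (⋀[ℤ]^3 H : Submodule ℤ (ExteriorAlgebra ℤ H)) ∧
    -- in particular, V = Λ³H / u(H) is torsion free
    (∀ ω ∈ (⋀[ℤ]^3 H : Submodule ℤ (ExteriorAlgebra ℤ H)), ∀ n : ℤ, n ≠ 0 →
        n • ω ∈ LinearMap.range u → ω ∈ LinearMap.range u) := by
  obtain rfl : e = fun i => b (.inl i) := funext fun i => (hbe i).symm
  obtain rfl : f = fun i => b (.inr i) := funext fun i => (hbf i).symm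
  obtain rfl : L = wedgeComplement b := hL.trans (by rw [hS₁, hS₂]; rfl)
  -- `ℤ`-module structures are unique; this makes the `•` of the statement the module action
  obtain rfl : ‹Module ℤ H› = AddCommGroup.toIntModule H := Subsingleton.elim _ _
  have : NeZero g := ⟨by omega⟩
  have := (b.reindex finSumFinEquiv).ExteriorAlgebra.isTorsionFree
  have hφu : Function.LeftInverse (thetaRetraction b) u := fun z =>
    hu z ▸ thetaRetraction_sum_ιMulti_basisPair b hg z
  have hcu (z : H) : c (u z) = ((g : ℤ) - 1) • z :=
    hu z ▸ map_sum_ιMulti_basisPair_of_contraction b hQalt hQef hQee hQff hc z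
  have hrange : LinearMap.range u ≤ ⋀[ℤ]^3 H := by
    rintro _ ⟨z, rfl⟩
    exact hu z ▸ sum_mem fun i _ => ιMulti_range ℤ 3 (Set.mem_range_self _)
  have hg₁ : (g : ℤ) - 1 ≠ 0 := by omega
  refine ⟨fun ω _ => ⟨fun h => ?_, ?_⟩,
    disjoint_range_of_leftInverse hφu (wedgeComplement_le_ker_thetaRetraction b hg),
    le_antisymm (sup_le hrange (wedgeComplement_le_fixedDegree b))
      (fixedDegree_three_le_sup_wedgeComplement b hu),
    fun ω _ n hn => mem_range_of_smul_mem_range_of_leftInverse hφu hn⟩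
  · exact mem_range_of_smul_mem_range_of_leftInverse hφu hg₁ (sub_eq_zero.mp h ▸ ⟨c ω, rfl⟩)
  · rintro ⟨z, rfl⟩
    rw [hcu, map_smul, sub_self]
end

section
/- Let H be a rank-2 situation: a vector space with nilpotent N satisfying N² = 0, viewed as monodromy logarithms N₁ = N₂ = N of a local system on (Δ*)². For Nh, Nk ∈ NH identified with classes in IH¹ via the map Nv ↦ (0, Nv) ∈ B¹, and a polarization-type bilinear form Q on H, the asymptotic height pairing is h_Q(t)(Nh, Nk) = (t₁t₂/(t₁+t₂))·Q(h, Nk) for (t₁,t₂) ∈ ℚ²_{≥0} \ {(0,0)}, and vanishes at t = (0,0). -/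
open Finset

/-- The pairing `q_t(∑ N_I (a I) ⊗ e_I, ∑ N_I* (b I) ⊗ e_I)` of the partial Koszul complex. -/
def koszulPairing {R M ι : Type*} [CommRing R] [AddCommGroup M] [Module R M] [Fintype ι]
    (t : ι → R) (N : Module.End R M) (a : Finset ι → M) (b : Finset ι → Module.Dual R M) : R :=
  ∑ I : Finset ι, (∏ i ∈ I, t i) * b I ((N ^ #I) (a I))

theorem koszulPairing_ite_singleton {R M ι : Type*} [CommRing R] [AddCommGroup M] [Module R M]
    [Fintype ι] [DecidableEq ι] (t : ι → R) (N : Module.End R M) (a : Finset ι → M)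
    (φ : Module.Dual R M) (j : ι) :
    koszulPairing t N a (fun I => if I = {j} then φ else 0) = t j * φ (N (a {j})) := by
  rw [koszulPairing, Finset.sum_eq_single {j}]
  · simp
  · intro I _ hI
    simp [hI]
  · simp

theorem stmt17_general (H : Type*) [AddCommGroup H] [Module ℚ H]
    (N : Module.End ℚ H)
    (Q : H →ₗ[ℚ] H →ₗ[ℚ] ℚ)
    (t₁ t₂ : ℚ)
    (t : Fin 2 → ℚ) (ht : t = ![t₁, t₂])
    (NI : Finset (Fin 2) → Module.End ℚ H) (hNI : ∀ I, NI I = N ^ I.card)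
    (q : (Finset (Fin 2) → H) → (Finset (Fin 2) → Module.Dual ℚ H) → ℚ)
    (hq : ∀ a bD, q a bD = ∑ I : Finset (Fin 2), (∏ i ∈ I, t i) * (bD I) ((NI I) (a I)))
    (h k : H)
    -- dual-side witness of `a_Q(α)` for `α = Nh ⊗ e₂`: `a_Q(Nh) = N*(Q(h,·))`
    (bD : Finset (Fin 2) → Module.Dual ℚ H)
    (hbD : ∀ I, bD I = if I = ({1} : Finset (Fin 2)) then Q h else 0)
    -- H-side witness of `β(t)`
    (aW : Finset (Fin 2) → H)
    (haW : (t₁, t₂) ≠ (0, 0) → ∀ I, aW I =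
        if I = ({0} : Finset (Fin 2)) then (-(t₂ / (t₁ + t₂))) • k
        else if I = ({1} : Finset (Fin 2)) then (t₁ / (t₁ + t₂)) • k else 0) :
    q aW bD = if (t₁, t₂) = (0, 0) then 0 else (t₁ * t₂ / (t₁ + t₂)) * Q h (N k) := by
  have hq_koszul : q aW bD = t₂ * Q h (N (aW {1})) :=
    calc q aW bD = koszulPairing ![t₁, t₂] N aW (fun I => if I = {1} then Q h else 0) := by
          simp only [hq, ht, hNI, funext hbD, koszulPairing]
      _ = t₂ * Q h (N (aW {1})) := koszulPairing_ite_singleton _ _ _ _ _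
  rw [hq_koszul]
  split_ifs with h0
  · rw [(Prod.mk.inj h0).2, zero_mul]
  · rw [haW h0, if_neg (by decide), if_pos rfl, map_smul, map_smul, smul_eq_mul]
    ring

/-- Let `H` carry a nilpotent `N` with `N² = 0`, viewed as the common monodromy
logarithm `N₁ = N₂ = N` of a local system on `(Δ*)²`, and let `Q` be a polarization-type
bilinear form (with the convention `Q(Nx, y) = Q(x, Ny)`).  Identifying `NH ≅ IH¹` via
`Nv ↦ (0, Nv) ∈ B¹`, the asymptotic height pairing `h_Q(t)(Nh, Nk) = q_t(a_Q α, β(t))`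
— where `α = Nh ⊗ e₂`, `a_Q(Nh) = N*(Q(h,·))`, and
`β(t) = −(t₂/(t₁+t₂)) Nk ⊗ e₁ + (t₁/(t₁+t₂)) Nk ⊗ e₂` (and `β(0) = Nk ⊗ e₂`) —
equals `(t₁t₂/(t₁+t₂))·Q(h, Nk)` for `(t₁,t₂) ∈ ℚ²_{≥0} \ {(0,0)}`, and vanishes at
`t = (0,0)`.  The pairing `q_t` is represented at witness level as in the partial Koszul
complex: `q_t(∑ N_I*(bD I) ⊗ e_I, ∑ N_I (a I) ⊗ e_I) = ∑_I t_I · (bD I)(N_I (a I))`. -/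
theorem stmt17 (H : Type*) [AddCommGroup H] [Module ℚ H] [FiniteDimensional ℚ H]
    (N : Module.End ℚ H) (hN2 : N * N = 0)
    (Q : H →ₗ[ℚ] H →ₗ[ℚ] ℚ)
    (hQN : ∀ x y, Q (N x) y = Q x (N y))
    (t₁ t₂ : ℚ) (ht₁ : 0 ≤ t₁) (ht₂ : 0 ≤ t₂)
    (t : Fin 2 → ℚ) (ht : t = ![t₁, t₂])
    (NI : Finset (Fin 2) → Module.End ℚ H) (hNI : ∀ I, NI I = N ^ I.card)
    (q : (Finset (Fin 2) → H) → (Finset (Fin 2) → Module.Dual ℚ H) → ℚ)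
    (hq : ∀ a bD, q a bD = ∑ I : Finset (Fin 2), (∏ i ∈ I, t i) * (bD I) ((NI I) (a I)))
    (h k : H)
    -- dual-side witness of `a_Q(α)` for `α = Nh ⊗ e₂`: `a_Q(Nh) = N*(Q(h,·))`
    (bD : Finset (Fin 2) → Module.Dual ℚ H)
    (hbD : ∀ I, bD I = if I = ({1} : Finset (Fin 2)) then Q h else 0)
    -- H-side witness of `β(t)`
    (aW : Finset (Fin 2) → H)
    (haW : (t₁, t₂) ≠ (0, 0) → ∀ I, aW I =
        if I = ({0} : Finset (Fin 2)) then (-(t₂ / (t₁ + t₂))) • k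
        else if I = ({1} : Finset (Fin 2)) then (t₁ / (t₁ + t₂)) • k else 0)
    (haW0 : (t₁, t₂) = (0, 0) → ∀ I, aW I = if I = ({1} : Finset (Fin 2)) then k else 0) :
    q aW bD = if (t₁, t₂) = (0, 0) then 0 else (t₁ * t₂ / (t₁ + t₂)) * Q h (N k) :=
  stmt17_general H N Q t₁ t₂ t ht NI hNI q hq h k bD hbD aW haW
end

section
/- Let V be a finite dimensional vector space over a field of characteristic zero with an increasing filtration W, and let N be a nilpotent endomorphism preserving W. If the relative weight filtration M = M(N,W) exists, it is unique: there is at most one increasing filtration M satisfying (a) N(M_k) ⊆ M_{k−2} for all k, and (b) for all k, ℓ ≥ 0, N^ℓ : Gr^M_{ℓ+k} Gr^W_k → Gr^M_{k−ℓ} Gr^W_k is an isomorphism. -/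
/-!
Two relative weight filtrations `M`, `M'` are compared on `M j ⊓ W k`, by induction on `k` upwards
from the bottom of `W` and, for fixed `k`, by descending induction on `j` from the top of `M'`.
The surjectivity half of (b), iterated down `M`, writes every element of `M (k - r) ⊓ W k` modulo
`W (k - 1)` as a sum of images `N ^ n (M (k + n) ⊓ W k)` with `n ≥ r`, on which `M` and `M'` agree
by the induction hypotheses. For `j < k` this alone moves `M j ⊓ W k` into `M' j`. For `k ≤ j`
such a sum, subtracted from `x`, makes `N ^ (j - k + 1) x` land in `W (k - 1)`; then the
injectivity half of (b), iterated down `W`, lowers `x` from `M' (j + 1)` to `M' j`.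
-/

/-- The image of `M j ⊓ W k` in `Gr^W_k = W k / W (k-1)`, encoded as the submodule
`(M j ⊓ W k) ⊔ W (k-1)` of `V` (so that statements about the induced filtration on `Gr^W_k`
become lattice statements about these submodules). -/
def grPiece {K V : Type*} [Field K] [AddCommGroup V] [Module K V]
    (W M : ℤ → Submodule K V) (k j : ℤ) : Submodule K V :=
  (M j ⊓ W k) ⊔ W (k - 1)

/-- `M` is a relative weight filtration of `W` with respect to `N`:
(a) `N(M_k) ⊆ M_{k-2}` for all `k`, and
(b) for all `k` and `ℓ ≥ 0`, `N^ℓ : Gr^M_{k+ℓ} Gr^W_k → Gr^M_{k-ℓ} Gr^W_k` is an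
isomorphism (expressed via `grPiece`: surjectivity as a `⊔`-equation, injectivity as a
`⊓ ≤` inclusion). -/
def IsRelWeightFiltration {K V : Type*} [Field K] [AddCommGroup V] [Module K V]
    (N : Module.End K V) (W M : ℤ → Submodule K V) : Prop :=
  Monotone M ∧ (∃ a, ∀ k ≤ a, M k = ⊥) ∧ (∃ b, ∀ k, b ≤ k → M k = ⊤) ∧
  (∀ k : ℤ, (M k).map N ≤ M (k - 2)) ∧
  (∀ (k : ℤ) (ℓ : ℕ),
    (Submodule.map (N ^ ℓ) (grPiece W M k (k + ℓ)) ⊔ grPiece W M k (k - ℓ - 1) =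
        grPiece W M k (k - ℓ)) ∧
    (grPiece W M k (k + ℓ) ⊓ Submodule.comap (N ^ ℓ) (grPiece W M k (k - ℓ - 1)) ≤
        grPiece W M k (k + ℓ - 1)))

theorem Int.strong_induction_down {P : ℤ → Prop} (b : ℤ) (top : ∀ n ≥ b, P n)
    (step : ∀ n < b, (∀ k > n, P k) → P n) (n : ℤ) : P n := by
  rw [← neg_neg n]
  induction -n using Int.strongRec (m := 1 - b) with
  | lt n hn => exact top (-n) (by omega)
  | ge n hn ih => exact step (-n) (by omega) fun k hk ↦ by simpa using ih (-k) (by omega)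

section

variable {R V : Type*} [Semiring R] [AddCommMonoid V] [Module R V] {N : Module.End R V}

theorem pow_apply_mem_of_map_le_self {p : Submodule R V} (hp : p.map N ≤ p) (n : ℕ) {x : V}
    (hx : x ∈ p) : (N ^ n) x ∈ p :=
  Module.End.pow_apply_mem_of_forall_mem n (fun _ hy ↦ hp (Submodule.mem_map_of_mem hy)) x hx

theorem pow_apply_mem_of_map_le_sub_two {F : ℤ → Submodule R V} (hmono : Monotone F)
    (hF : ∀ q, (F q).map N ≤ F (q - 2)) {n : ℕ} {q j : ℤ} {x : V} (hx : x ∈ F q)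
    (hqj : q ≤ j + 2 * n) : (N ^ n) x ∈ F j := by
  induction n generalizing j with
  | zero => exact hmono (by simpa using hqj) hx
  | succ n ih =>
    rw [pow_succ', Module.End.mul_apply]
    exact hmono (by omega) (hF _ (Submodule.mem_map_of_mem (ih (j := j + 2) (by omega))))

end

namespace IsRelWeightFiltration

variable {K V : Type*} [Field K] [AddCommGroup V] [Module K V] {N : Module.End K V}
  {W M M' : ℤ → Submodule K V}

theorem inf_le_map_pow_sup (hNW : ∀ k, (W k).map N ≤ W k) {k : ℤ} {ℓ : ℕ}
    (hsurj : (grPiece W M k (k + ℓ)).map (N ^ ℓ) ⊔ grPiece W M k (k - ℓ - 1) =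
      grPiece W M k (k - ℓ)) :
    M (k - ℓ) ⊓ W k ≤ (M (k + ℓ) ⊓ W k).map (N ^ ℓ) ⊔ grPiece W M k (k - ℓ - 1) := by
  have hW : (W (k - 1)).map (N ^ ℓ) ≤ grPiece W M k (k - ℓ - 1) := fun _ ⟨y, hy, hxy⟩ ↦
    hxy ▸ Submodule.mem_sup_right (pow_apply_mem_of_map_le_self (hNW _) ℓ hy)
  calc M (k - ℓ) ⊓ W k ≤ grPiece W M k (k - ℓ) := le_sup_left
    _ = _ := hsurj.symm
    _ ≤ _ := by
      rw [grPiece, Submodule.map_sup, sup_assoc]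
      exact sup_le_sup_left (sup_le hW le_rfl) _

theorem inf_le_sup_of_map_pow_le (hNW : ∀ k, (W k).map N ≤ W k)
    (hM : IsRelWeightFiltration N W M) {G : Submodule K V} {k i : ℤ} (hik : i ≤ k)
    (hG : ∀ n : ℕ, k - n ≤ i → (M (k + n) ⊓ W k).map (N ^ n) ≤ G) :
    M i ⊓ W k ≤ G ⊔ W (k - 1) := by
  obtain ⟨-, ⟨a, ha⟩, -, -, hgr⟩ := hM
  induction i using Int.strongRec (m := a) with
  | lt i hi => simp [ha i hi.le]
  | ge i _ ih =>
    obtain ⟨ℓ, rfl⟩ : ∃ ℓ : ℕ, i = k - ℓ := ⟨(k - i).toNat, by omega⟩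
    have hlower : M (k - ℓ - 1) ⊓ W k ≤ G ⊔ W (k - 1) :=
      ih _ (by omega) (by omega) fun n hn ↦ hG n (by omega)
    calc M (k - ℓ) ⊓ W k ≤ (M (k + ℓ) ⊓ W k).map (N ^ ℓ) ⊔ grPiece W M k (k - ℓ - 1) :=
          inf_le_map_pow_sup hNW (hgr k ℓ).1
      _ ≤ G ⊔ (G ⊔ W (k - 1)) := sup_le_sup (hG ℓ le_rfl) (sup_le hlower le_sup_right)
      _ = G ⊔ W (k - 1) := by rw [← sup_assoc, sup_idem]

theorem mem_of_pow_apply_mem {a : ℤ} (hWbot : ∀ k ≤ a, W k = ⊥)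
    (hNW : ∀ k, (W k).map N ≤ W k) (hM : IsRelWeightFiltration N W M) (k : ℤ) (ℓ : ℕ)
    {d : V} (hdM : d ∈ M (k + ℓ)) (hdW : d ∈ W k) (hNd : (N ^ ℓ) d ∈ M (k - ℓ - 1)) :
    d ∈ M (k + ℓ - 1) := by
  obtain ⟨hmono, -, -, hMN, hgr⟩ := hM
  induction k using Int.strongRec (m := a) generalizing ℓ d with
  | lt k hk =>
    rw [hWbot k hk.le, Submodule.mem_bot] at hdW
    simp [hdW]
  | ge k _ ih =>
    obtain ⟨y, hy, w, hw, rfl⟩ := Submodule.mem_sup.mp <| (hgr k ℓ).2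
      ⟨Submodule.mem_sup_left ⟨hdM, hdW⟩,
        Submodule.mem_sup_left ⟨hNd, pow_apply_mem_of_map_le_self (hNW k) ℓ hdW⟩⟩
    have hwM : w ∈ M (k + ℓ) := by simpa using sub_mem hdM (hmono (by omega) hy.1)
    have hNw : (N ^ ℓ) w ∈ M (k - ℓ - 1) := by
      simpa using
        sub_mem hNd (pow_apply_mem_of_map_le_sub_two (n := ℓ) hmono hMN hy.1 (by omega))
    have hNNw : (N ^ (ℓ + 1)) w ∈ M (k - 1 - (ℓ + 1 : ℕ) - 1) := by
      rw [pow_succ', Module.End.mul_apply]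
      exact hmono (by omega) (hMN _ (Submodule.mem_map_of_mem hNw))
    -- `w` lies one step lower in `W` with one more power of `N`: the sum `k + ℓ` is unchanged.
    have hw' := ih (k - 1) (by omega) (ℓ + 1) (hmono (by omega) hwM) hw hNNw
    exact add_mem hy.1 (hmono (by omega) hw')

theorem inf_le_of_lt (hNW : ∀ k, (W k).map N ≤ W k) (hM : IsRelWeightFiltration N W M)
    (hM' : IsRelWeightFiltration N W M') {k j : ℤ} (hS : ∀ i, M i ⊓ W (k - 1) ≤ M' i)
    (hT : ∀ i > j, M i ⊓ W k ≤ M' i) (hjk : j < k) : M j ⊓ W k ≤ M' j := by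
  obtain ⟨hmono, -, -, hMN, -⟩ := id hM
  obtain ⟨hmono', -, -, hMN', -⟩ := hM'
  have hG : ∀ n : ℕ, k - n ≤ j → (M (k + n) ⊓ W k).map (N ^ n) ≤ M j ⊓ M' j := by
    rintro n hn _ ⟨y, hy, rfl⟩
    exact ⟨pow_apply_mem_of_map_le_sub_two hmono hMN hy.1 (by omega),
      pow_apply_mem_of_map_le_sub_two hmono' hMN' (hT _ (by omega) hy) (by omega)⟩
  intro x hx
  obtain ⟨v, hv, w, hw, rfl⟩ :=
    Submodule.mem_sup.mp (inf_le_sup_of_map_pow_le hNW hM hjk.le hG hx)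
  have hwM : w ∈ M j := by simpa using sub_mem hx.1 hv.1
  exact add_mem hv.2 (hS j ⟨hwM, hw⟩)

theorem inf_le_of_le {a : ℤ} (hWbot : ∀ k ≤ a, W k = ⊥) (hNW : ∀ k, (W k).map N ≤ W k)
    (hM : IsRelWeightFiltration N W M) (hM' : IsRelWeightFiltration N W M') {k j : ℤ}
    (hS : ∀ i, M i ⊓ W (k - 1) ≤ M' i) (hT : ∀ i > j, M i ⊓ W k ≤ M' i) (hkj : k ≤ j) :
    M j ⊓ W k ≤ M' j := by
  obtain ⟨ℓ, rfl⟩ : ∃ ℓ : ℕ, j = k + ℓ := ⟨(j - k).toNat, by omega⟩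
  obtain ⟨hmono, -, -, hMN, -⟩ := id hM
  obtain ⟨hmono', -, -, hMN', -⟩ := id hM'
  -- For `n ≥ ℓ + 2` the leftover power `N ^ (n - (ℓ + 1))` is at least `N`, which is what
  -- brings `M (k + n)` down into `M (k + ℓ)`.
  set H := M (k + ℓ) ⊓ M' (k + ℓ) ⊓ W k
  have hG : ∀ n : ℕ, k - n ≤ k - (ℓ + 2 : ℕ) →
      (M (k + n) ⊓ W k).map (N ^ n) ≤ H.map (N ^ (ℓ + 1)) := by
    rintro n hn _ ⟨y, hy, rfl⟩
    refine ⟨(N ^ (n - (ℓ + 1))) y, ⟨⟨?_, ?_⟩, ?_⟩, ?_⟩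
    · exact pow_apply_mem_of_map_le_sub_two hmono hMN hy.1 (by omega)
    · exact pow_apply_mem_of_map_le_sub_two hmono' hMN' (hT _ (by omega) hy) (by omega)
    · exact pow_apply_mem_of_map_le_self (hNW k) _ hy.2
    · rw [← Module.End.mul_apply, ← pow_add, Nat.add_sub_cancel' (by omega)]
  intro x hx
  have hNx : (N ^ (ℓ + 1)) x ∈ M (k - (ℓ + 2 : ℕ)) ⊓ W k :=
    ⟨pow_apply_mem_of_map_le_sub_two hmono hMN hx.1 (by omega),
      pow_apply_mem_of_map_le_self (hNW k) _ hx.2⟩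
  obtain ⟨_, ⟨v, hv, rfl⟩, w, hw, hvw⟩ :=
    Submodule.mem_sup.mp (inf_le_sup_of_map_pow_le hNW hM (by omega) hG hNx)
  have hdW : x - v ∈ W k := sub_mem hx.2 hv.2
  have hNd : (N ^ (ℓ + 1)) (x - v) = w := by rw [map_sub, ← hvw]; abel
  have hwM : w ∈ M (k - (ℓ + 1 : ℕ) - 1) :=
    hNd ▸ pow_apply_mem_of_map_le_sub_two hmono hMN (sub_mem hx.1 hv.1.1) (by omega)
  have hd : x - v ∈ M' (k + (ℓ + 1 : ℕ) - 1) :=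
    hM'.mem_of_pow_apply_mem hWbot hNW k (ℓ + 1)
      (hT _ (by omega) ⟨hmono (by omega) (sub_mem hx.1 hv.1.1), hdW⟩) hdW (hNd ▸ hS _ ⟨hwM, hw⟩)
  simpa using add_mem hv.1.2 (hmono' (by omega) hd)

theorem inf_le {a : ℤ} (hWbot : ∀ k ≤ a, W k = ⊥) (hNW : ∀ k, (W k).map N ≤ W k)
    (hM : IsRelWeightFiltration N W M) (hM' : IsRelWeightFiltration N W M') (k j : ℤ) :
    M j ⊓ W k ≤ M' j := by
  obtain ⟨-, -, ⟨b, hb⟩, -, -⟩ := id hM'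
  induction k using Int.strongRec (m := a) generalizing j with
  | lt k hk => simp [hWbot k hk.le]
  | ge k _ hS =>
    induction j using Int.strong_induction_down b with
    | top j hj => simp [hb j hj]
    | step j _ hT =>
      rcases lt_or_ge j k with hjk | hkj
      · exact inf_le_of_lt hNW hM hM' (hS _ (by omega)) hT hjk
      · exact inf_le_of_le hWbot hNW hM hM' (hS _ (by omega)) hT hkj

end IsRelWeightFiltration

theorem stmt18_general (K V : Type*) [Field K] [AddCommGroup V] [Module K V]
    (N : Module.End K V)
    (W : ℤ → Submodule K V)
    (hWbot : ∃ a, ∀ k ≤ a, W k = ⊥) (hWtop : ∃ b, ∀ k, b ≤ k → W k = ⊤)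
    (hNW : ∀ k, (W k).map N ≤ W k)
    (M M' : ℤ → Submodule K V)
    (hM : IsRelWeightFiltration N W M) (hM' : IsRelWeightFiltration N W M') :
    M = M' := by
  obtain ⟨a, ha⟩ := hWbot
  obtain ⟨b, hb⟩ := hWtop
  funext j
  apply le_antisymm
  · simpa [hb b le_rfl] using hM.inf_le ha hNW hM' b j
  · simpa [hb b le_rfl] using hM'.inf_le ha hNW hM b j

/-- Let `V` be a finite dimensional vector space over a field of characteristic
zero with a (finite, exhaustive) increasing filtration `W`, and `N` a nilpotent endomorphism
preserving `W`.  If the relative weight filtration `M = M(N, W)` exists, it is unique. -/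
theorem stmt18 (K V : Type*) [Field K] [CharZero K] [AddCommGroup V] [Module K V]
    [FiniteDimensional K V]
    (N : Module.End K V) (hN : IsNilpotent N)
    (W : ℤ → Submodule K V) (hWmono : Monotone W)
    (hWbot : ∃ a, ∀ k ≤ a, W k = ⊥) (hWtop : ∃ b, ∀ k, b ≤ k → W k = ⊤)
    (hNW : ∀ k, (W k).map N ≤ W k)
    (M M' : ℤ → Submodule K V)
    (hM : IsRelWeightFiltration N W M) (hM' : IsRelWeightFiltration N W M') :
    M = M' :=
  stmt18_general K V N W hWbot hWtop hNW M M' hM hM'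
end
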